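/- arXiv:2107.14513 — 10 statements merged into one kernel-verified Lean document; each statement's English description precedes it below -/
import Mathlib

section
/- For every δ > 0 and every x ∈ B there exists t ∈ [δ, Λ₀·δ], with Λ₀ = √(1+Λ²), such that the point (x, f(x)+t) belongs to G(δ), i.e. its Euclidean distance to the graph F̂ equals δ. -/
open Metric Set

noncomputable section

/-- `ℝ^n` with the Euclidean norm. -/
abbrev Euc (n : ℕ) := EuclideanSpace ℝ (Fin n)

/-- The space `ℝ^{d-1} × ℝ` equipped with the Euclidean (l²) product distance. -/
abbrev Pt (d : ℕ) := WithLp 2 (Euc (d - 1) × ℝ)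

/-- The point `(x, y) ∈ ℝ^{d-1} × ℝ`. -/
def toPt (d : ℕ) (x : Euc (d - 1)) (y : ℝ) : Pt d :=
  (WithLp.equiv 2 (Euc (d - 1) × ℝ)).symm (x, y)

/-- First (horizontal) component of a point of `ℝ^{d-1} × ℝ`. -/
def fstPt (d : ℕ) (p : Pt d) : Euc (d - 1) := (WithLp.equiv 2 (Euc (d - 1) × ℝ) p).1

/-- Second (vertical) component of a point of `ℝ^{d-1} × ℝ`. -/
def sndPt (d : ℕ) (p : Pt d) : ℝ := (WithLp.equiv 2 (Euc (d - 1) × ℝ) p).2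

/-- `F̂`, the graph of `f` over the ball `B̂` of radius `R`. -/
def graphF (d : ℕ) (f : Euc (d - 1) → ℝ) (R : ℝ) : Set (Pt d) :=
  (fun x => toPt d x (f x)) '' Metric.ball (0 : Euc (d - 1)) R

/-- `G(δ)`: points above the graph, over the smaller ball `B` of radius `r`, whose
Euclidean distance to the graph `F̂` equals `δ`. -/
def GSet (d : ℕ) (f : Euc (d - 1) → ℝ) (R r δ : ℝ) : Set (Pt d) :=
  { p | fstPt d p ∈ Metric.ball (0 : Euc (d - 1)) r ∧ f (fstPt d p) < sndPt d p ∧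
        Metric.infDist p (graphF d f R) = δ }

private lemma distPt (d : ℕ) (x x' : Euc (d - 1)) (a b : ℝ) :
    dist (toPt d x a) (toPt d x' b) = Real.sqrt (dist x x' ^ 2 + dist a b ^ 2) := by
  rw [WithLp.prod_dist_eq_of_L2]; rfl

/-- For every `δ > 0` and every `x ∈ B` there exists `t ∈ [δ, Λ₀ δ]`,
with `Λ₀ = √(1+Λ²)`, such that the point `(x, f x + t)` belongs to `G(δ)`. -/
theorem exists_point_on_level_set_above
    (d : ℕ) (hd : 2 ≤ d) (Λ R r : ℝ) (hΛ : 0 ≤ Λ)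
    (hr : 0 < r) (hrR : r < R)
    (f : Euc (d - 1) → ℝ)
    (hf : LipschitzOnWith Λ.toNNReal f (Metric.ball (0 : Euc (d - 1)) R))
    (δ : ℝ) (hδ : 0 < δ)
    (x : Euc (d - 1)) (hx : x ∈ Metric.ball (0 : Euc (d - 1)) r) :
    ∃ t ∈ Set.Icc δ (Real.sqrt (1 + Λ ^ 2) * δ),
      toPt d x (f x + t) ∈ GSet d f R r δ := by
  have hxR : x ∈ Metric.ball (0 : Euc (d - 1)) R := by
    rw [mem_ball] at hx ⊢; linarith
  set Λ₀ := Real.sqrt (1 + Λ ^ 2) with hΛ₀def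
  have hΛ₀sq : Λ₀ ^ 2 = 1 + Λ ^ 2 := Real.sq_sqrt (by positivity)
  have hΛ₀nn : 0 ≤ Λ₀ := Real.sqrt_nonneg _
  have hΛ₀1 : 1 ≤ Λ₀ := by nlinarith [sq_nonneg Λ]
  set φ : ℝ → ℝ := fun t => infDist (toPt d x (f x + t)) (graphF d f R) with hφdef
  have hlip : LipschitzWith 1 (fun t : ℝ => toPt d x (f x + t)) := by
    apply LipschitzWith.of_dist_le_mul
    intro a b
    rw [distPt]
    simp [Real.sqrt_sq dist_nonneg]
  have hcont : Continuous φ := (continuous_infDist_pt _).comp hlip.continuous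
  have hφδ : φ δ ≤ δ := by
    have h1 : toPt d x (f x) ∈ graphF d f R := ⟨x, hxR, rfl⟩
    have h2 := infDist_le_dist_of_mem (x := toPt d x (f x + δ)) h1
    have h3 : dist (toPt d x (f x + δ)) (toPt d x (f x)) = δ := by
      rw [distPt]
      have : dist (f x + δ) (f x) = δ := by
        rw [Real.dist_eq]; ring_nf; exact abs_of_pos hδ
      simp [this, Real.sqrt_sq hδ.le]
    rwa [h3] at h2
  have hgen : ∀ x' ∈ Metric.ball (0 : Euc (d - 1)) R,
      δ ≤ dist (toPt d x (f x + Λ₀ * δ)) (toPt d x' (f x')) := by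
    intro x' hx'R
    rw [distPt, Real.le_sqrt hδ.le]
    set s := dist x x' with hs
    set v := dist (f x + Λ₀ * δ) (f x') with hv
    have hs0 : 0 ≤ s := dist_nonneg
    have hv0 : 0 ≤ v := dist_nonneg
    have hlipd : dist (f x') (f x) ≤ Λ * s := by
      have := hf.dist_le_mul x' hx'R x hxR
      rwa [Real.coe_toNNReal _ hΛ, dist_comm x' x] at this
    have h1 : f x' - f x ≤ Λ * s := by
      have h := le_abs_self (f x' - f x)
      rw [Real.dist_eq] at hlipd
      linarith
    have h2 : f x + Λ₀ * δ - f x' ≤ v := by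
      rw [hv, Real.dist_eq]; exact le_abs_self _
    have hkey : Λ₀ * δ ≤ Λ * s + v := by linarith
    nlinarith [mul_self_le_mul_self (mul_nonneg hΛ₀nn hδ.le) hkey,
      sq_nonneg (Λ * v - s), sq_nonneg Λ]
    positivity
  have hφtop : δ ≤ φ (Λ₀ * δ) := by
    by_contra h
    push_neg at h
    have h' : infDist (toPt d x (f x + Λ₀ * δ)) (graphF d f R) < δ := h
    obtain ⟨q, hq, hdq⟩ :=
      (infDist_lt_iff (⟨toPt d x (f x), ⟨x, hxR, rfl⟩⟩ : (graphF d f R).Nonempty)).1 h'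
    obtain ⟨x', hx'R, rfl⟩ := hq
    exact absurd hdq (not_lt.2 (hgen x' hx'R))
  have hsub := intermediate_value_Icc (le_mul_of_one_le_left hδ.le hΛ₀1) hcont.continuousOn
  obtain ⟨t, htI, hφt⟩ := hsub ⟨hφδ, hφtop⟩
  exact ⟨t, htI, by
    refine ⟨?_, ?_, hφt⟩
    · simpa [fstPt, toPt] using hx
    · simp only [fstPt, sndPt, toPt, Equiv.apply_symm_apply]
      linarith [htI.1]⟩
end
end

section
/- Let δ > 0, let p = (x,y) ∈ G(δ), and let x̂ ∈ B̂ with |x̂ − x| > δΛ/Λ₀, where Λ₀ = √(1+Λ²). Then f(x̂) ≤ Λ|x̂ − x| + y − Λ₀·δ. -/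
open Metric Set

noncomputable section

/-
The graph misses the open δ-ball around p = (x, y) and f(x) < y, so by the intermediate value
theorem the graph over the segment from x to x̂ stays below the lower hemisphere
y - √(δ² - s²) of that ball. At horizontal distance s = δΛ/Λ₀ the hemisphere has height
y - δ/Λ₀, and the Lipschitz bound over the remaining distance |x̂ - x| - s gives
f(x̂) ≤ y - δ/Λ₀ + Λ(|x̂ - x| - s) = Λ|x̂ - x| + y - Λ₀δ.
-/

theorem ContinuousOn.le_of_ne_on_Ico {g : ℝ → ℝ} {a b c : ℝ} (hab : a ≤ b)
    (hg : ContinuousOn g (Icc a b)) (ha : g a ≤ c) (hne : ∀ u ∈ Ico a b, g u ≠ c) :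
    g b ≤ c := by
  by_contra! hb
  obtain ⟨u, hu, hgu⟩ := intermediate_value_Icc hab hg ⟨ha, hb.le⟩
  rcases hu.2.lt_or_eq with hub | rfl
  · exact hne u ⟨hu.1, hub⟩ hgu
  · exact hb.ne' hgu

variable {E : Type*} [NormedAddCommGroup E] [NormedSpace ℝ E] {f : E → ℝ} {S : Set E}
  {x z : E} {y δ : ℝ}

/-- `hclear` says that the graph of `f` over `S` misses the open `δ`-ball around `(x, y)`; since
`f x` lies below that ball, by continuity the graph stays below its lower hemisphere. -/
theorem le_sub_sqrt_of_forall_sq_le (hS : Convex ℝ S) (hf : ContinuousOn f S) (hx : x ∈ S)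
    (hz : z ∈ S) (hclear : ∀ a ∈ S, δ ^ 2 ≤ dist a x ^ 2 + (f a - y) ^ 2) (hfx : f x < y)
    (hzx : dist z x ≤ δ) : f z ≤ y - √(δ ^ 2 - dist z x ^ 2) := by
  have hδ : 0 ≤ δ := dist_nonneg.trans hzx
  have hfx' : f x ≤ y - δ := by nlinarith [hclear x hx, dist_self x]
  have hsq : √(δ ^ 2 - dist z x ^ 2) ^ 2 = δ ^ 2 - dist z x ^ 2 :=
    Real.sq_sqrt (by nlinarith [dist_nonneg (x := z) (y := x)])
  have hle : √(δ ^ 2 - dist z x ^ 2) ≤ δ := by nlinarith [Real.sqrt_nonneg (δ ^ 2 - dist z x ^ 2)]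
  rcases eq_or_ne z x with rfl | hzx'
  · linarith
  set g : ℝ → ℝ := fun u => f (AffineMap.lineMap x z u)
  have hseg : ∀ u ∈ Icc (0 : ℝ) 1, AffineMap.lineMap x z u ∈ S :=
    fun _ => hS.lineMap_mem hx hz
  have hg : ContinuousOn g (Icc 0 1) :=
    hf.comp (AffineMap.lineMap_continuous.continuousOn) hseg
  have := hg.le_of_ne_on_Ico zero_le_one (c := y - √(δ ^ 2 - dist z x ^ 2))
    (by simp [g]; linarith) ?_
  · simpa [g] using this
  intro u hu hgu
  have h := hclear _ (hseg u (Ico_subset_Icc_self hu))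
  rw [dist_lineMap_left, Real.norm_eq_abs, abs_of_nonneg hu.1, dist_comm, show f _ = g u from rfl,
    hgu, show (y - √(δ ^ 2 - dist z x ^ 2) - y) ^ 2 = δ ^ 2 - dist z x ^ 2 by
      linear_combination hsq] at h
  have hpos : 0 < dist z x := dist_pos.mpr hzx'
  have hu1 : 0 < (1 - u) * (1 + u) := mul_pos (sub_pos.2 hu.2) (by linarith [hu.1])
  nlinarith [mul_pos (mul_pos hpos hpos) hu1]

theorem le_of_lipschitzOn_of_forall_sq_le {K : NNReal} {xh : E} (hS : Convex ℝ S)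
    (hf : LipschitzOnWith K f S) (hx : x ∈ S) (hxh : xh ∈ S)
    (hclear : ∀ a ∈ S, δ ^ 2 ≤ dist a x ^ 2 + (f a - y) ^ 2) (hfx : f x < y) {s : ℝ}
    (hs : 0 ≤ s) (hsx : s ≤ dist xh x) (hsδ : s ≤ δ) :
    f xh ≤ K * (dist xh x - s) + y - √(δ ^ 2 - s ^ 2) := by
  set z := AffineMap.lineMap x xh (s / dist xh x)
  have hs1 : s / dist xh x ∈ Icc (0 : ℝ) 1 :=
    ⟨div_nonneg hs dist_nonneg, div_le_one_of_le₀ hsx dist_nonneg⟩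
  have hz : z ∈ S := hS.lineMap_mem hx hxh hs1
  have hzx : dist z x = s := by
    rw [dist_lineMap_left, Real.norm_eq_abs, abs_of_nonneg hs1.1, dist_comm x,
      div_mul_cancel_of_imp (fun h => le_antisymm (h ▸ hsx) hs)]
  have hxhz : dist xh z = dist xh x - s := by
    rw [dist_comm, dist_lineMap_right, Real.norm_eq_abs, abs_of_nonneg (by linarith [hs1.2]),
      sub_mul, one_mul, dist_comm x, div_mul_cancel_of_imp (fun h => le_antisymm (h ▸ hsx) hs)]
  have hbelow := le_sub_sqrt_of_forall_sq_le hS hf.continuousOn hx hz hclear hfx (hzx ▸ hsδ)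
  have hlip := hf.dist_le_mul xh hxh z hz
  rw [hzx] at hbelow
  rw [hxhz, Real.dist_eq] at hlip
  linarith [le_abs_self (f xh - f z)]

theorem sq_le_dist_sq_add_sq_of_mem_GSet {d : ℕ} {f : Euc (d - 1) → ℝ} {R r δ y : ℝ}
    {x a : Euc (d - 1)} (hp : toPt d x y ∈ GSet d f R r δ) (ha : a ∈ ball 0 R) :
    δ ^ 2 ≤ dist a x ^ 2 + (f a - y) ^ 2 := by
  have hδ : 0 ≤ δ := hp.2.2 ▸ infDist_nonneg
  have hle : δ ≤ dist (toPt d x y) (toPt d a (f a)) :=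
    hp.2.2 ▸ infDist_le_dist_of_mem ⟨a, ha, rfl⟩
  rw [WithLp.prod_dist_eq_of_L2, Real.le_sqrt hδ (by positivity)] at hle
  simpa [toPt, dist_comm x, Real.dist_eq, sq_abs, abs_sub_comm y] using hle

theorem graph_below_cone_far_from_level_point_general
    (d : ℕ) (Λ R r : ℝ) (hΛ : 0 ≤ Λ)
    (hrR : r < R)
    (f : Euc (d - 1) → ℝ)
    (hf : LipschitzOnWith Λ.toNNReal f (Metric.ball (0 : Euc (d - 1)) R))
    (δ : ℝ)
    (x : Euc (d - 1)) (y : ℝ) (hp : toPt d x y ∈ GSet d f R r δ)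
    (xh : Euc (d - 1)) (hxh : xh ∈ Metric.ball (0 : Euc (d - 1)) R)
    (hfar : δ * Λ / Real.sqrt (1 + Λ ^ 2) < ‖xh - x‖) :
    f xh ≤ Λ * ‖xh - x‖ + y - Real.sqrt (1 + Λ ^ 2) * δ := by
  obtain ⟨hxr, hfxy, -⟩ := id hp
  simp only [fstPt, sndPt, toPt, Equiv.apply_symm_apply] at hxr hfxy
  set Λ₀ := √(1 + Λ ^ 2)
  have hΛ₀ : Λ₀ ^ 2 = 1 + Λ ^ 2 := Real.sq_sqrt (by positivity)
  have hΛ₀pos : 0 < Λ₀ := Real.sqrt_pos.mpr (by positivity)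
  have hδ : 0 ≤ δ := hp.2.2 ▸ infDist_nonneg
  set s := δ * Λ / Λ₀
  have hsδ : s ≤ δ := div_le_of_le_mul₀ hΛ₀pos.le hδ (by nlinarith)
  have hroot : √(δ ^ 2 - s ^ 2) = δ / Λ₀ := by
    rw [← Real.sqrt_sq (by positivity : 0 ≤ δ / Λ₀)]
    congr 1
    rw [div_pow, div_pow, eq_div_iff (by positivity), sub_mul, div_mul_cancel₀ _ (by positivity),
      hΛ₀]
    ring
  have key := le_of_lipschitzOn_of_forall_sq_le (convex_ball 0 R) hf
    (ball_subset_ball hrR.le hxr) hxh (fun a ha => sq_le_dist_sq_add_sq_of_mem_GSet hp ha) hfxy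
    (by positivity) (dist_eq_norm xh x ▸ hfar.le) hsδ
  rw [Real.coe_toNNReal _ hΛ, hroot, dist_eq_norm] at key
  have hcone : Λ * s + δ / Λ₀ = Λ₀ * δ := by
    rw [show Λ * s + δ / Λ₀ = δ * Λ₀ ^ 2 / Λ₀ by rw [hΛ₀]; ring, pow_two, ← mul_assoc,
      mul_div_cancel_right₀ _ hΛ₀pos.ne', mul_comm]
  linarith

/-- If `p = (x,y) ∈ G(δ)` and `xh ∈ B̂` with `‖xh - x‖ > δΛ/Λ₀`, where
`Λ₀ = √(1+Λ²)`, then `f xh ≤ Λ‖xh - x‖ + y - Λ₀ δ`. -/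
theorem graph_below_cone_far_from_level_point
    (d : ℕ) (hd : 2 ≤ d) (Λ R r : ℝ) (hΛ : 0 ≤ Λ)
    (hr : 0 < r) (hrR : r < R)
    (f : Euc (d - 1) → ℝ)
    (hf : LipschitzOnWith Λ.toNNReal f (Metric.ball (0 : Euc (d - 1)) R))
    (δ : ℝ) (hδ : 0 < δ)
    (x : Euc (d - 1)) (y : ℝ) (hp : toPt d x y ∈ GSet d f R r δ)
    (xh : Euc (d - 1)) (hxh : xh ∈ Metric.ball (0 : Euc (d - 1)) R)
    (hfar : δ * Λ / Real.sqrt (1 + Λ ^ 2) < ‖xh - x‖) :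
    f xh ≤ Λ * ‖xh - x‖ + y - Real.sqrt (1 + Λ ^ 2) * δ :=
  graph_below_cone_far_from_level_point_general d Λ R r hΛ hrR f hf δ x y hp xh hxh hfar
end
end

section
/- Let δ > 0 and p ∈ G(δ). Then every point r of the graph F̂ satisfies dist(r, 𝒞_p⁺) ≥ δ, where dist(r, 𝒞_p⁺) is the Euclidean (infimum) distance from r to the open upper cone 𝒞_p⁺; equivalently, F̂ is contained in the set {r ∈ B̂×ℝ : dist(r, 𝒞_p⁺) ≥ δ}. -/
open Metric Set

noncomputable section

/-- The open upper cone with vertex `p` and slope `Λ`: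
`𝒞_p⁺ = p + {(x,y) : y > Λ|x|}`. -/
def upperCone (d : ℕ) (Λ : ℝ) (p : Pt d) : Set (Pt d) :=
  { q | Λ * ‖fstPt d q - fstPt d p‖ < sndPt d q - sndPt d p }

/-!
Translating by `p - z` moves a cone point `z` to the vertex `p` and the graph point
`q = (x, f x)` to `q - (z - p)`, which lies in the downward open cone of slope `Λ` at `q`,
hence below the `Λ`-Lipschitz graph. After shortening the horizontal part of `z - p` to a
multiple of `x - fstPt p` (which only brings the translate closer to `p`), the translate lies
over the segment from `fstPt p` to `x`, inside the ball. The segment from `p`, which is above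
the graph, to this translate then crosses the graph, so `δ = infDist p F̂ ≤ dist q z`.
-/

theorem exists_smul_norm_le_and_norm_sub_smul_le {E : Type*} [SeminormedAddCommGroup E]
    [NormedSpace ℝ E] (e u : E) :
    ∃ c ∈ Icc (0 : ℝ) 1, ‖c • e‖ ≤ ‖u‖ ∧ ‖e - c • e‖ ≤ ‖e - u‖ := by
  by_cases hue : ‖e‖ ≤ ‖u‖
  · exact ⟨1, right_mem_Icc.2 zero_le_one, by simpa using hue, by simp⟩
  have he : 0 < ‖e‖ := (norm_nonneg u).trans_lt (not_le.1 hue)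
  have hc₁ : ‖u‖ / ‖e‖ ≤ 1 := div_le_one_of_le₀ (not_le.1 hue).le he.le
  refine ⟨‖u‖ / ‖e‖, ⟨by positivity, hc₁⟩, ?_, ?_⟩
  · rw [norm_smul, Real.norm_of_nonneg (by positivity), div_mul_cancel₀ _ he.ne']
  · calc ‖e - (‖u‖ / ‖e‖) • e‖ = ‖(1 - ‖u‖ / ‖e‖) • e‖ := by rw [sub_smul, one_smul]
      _ = (1 - ‖u‖ / ‖e‖) * ‖e‖ := by rw [norm_smul, Real.norm_of_nonneg (sub_nonneg.2 hc₁)]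
      _ = ‖e‖ - ‖u‖ := by rw [sub_mul, div_mul_cancel₀ _ he.ne', one_mul]
      _ ≤ ‖e - u‖ := norm_sub_norm_le e u

theorem WithLp.prod_dist_le_of_L2 {α β : Type*} [SeminormedAddCommGroup α]
    [SeminormedAddCommGroup β] {x y x' y' : WithLp 2 (α × β)}
    (h₁ : dist x.fst y.fst ≤ dist x'.fst y'.fst) (h₂ : dist x.snd y.snd ≤ dist x'.snd y'.snd) :
    dist x y ≤ dist x' y' := by
  rw [WithLp.prod_dist_eq_of_L2, WithLp.prod_dist_eq_of_L2]
  gcongr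

theorem infDist_le_dist_of_sign_change_on_segment {V : Type*} [NormedAddCommGroup V]
    [NormedSpace ℝ V] {s : Set V} {g : V → ℝ} {a b : V} (hg : ContinuousOn g (segment ℝ a b))
    (hga : 0 ≤ g a) (hgb : g b ≤ 0) (hs : ∀ w ∈ segment ℝ a b, g w = 0 → w ∈ s) :
    infDist a s ≤ dist a b := by
  obtain ⟨w, hw, hgw⟩ := (convex_segment a b).isPreconnected.intermediate_value
    (right_mem_segment ℝ a b) (left_mem_segment ℝ a b) hg ⟨hgb, hga⟩
  calc infDist a s ≤ dist a w := infDist_le_dist_of_mem (hs w hw hgw)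
    _ ≤ dist a b := by linarith [dist_add_dist_of_mem_segment hw, dist_nonneg (x := w) (y := b)]

theorem infDist_graphF_le_dist {d : ℕ} {f : Euc (d - 1) → ℝ} {R : ℝ}
    (hf : ContinuousOn f (ball 0 R)) {a b : Pt d} (ha : fstPt d a ∈ ball 0 R)
    (hb : fstPt d b ∈ ball 0 R) (hfa : f (fstPt d a) ≤ sndPt d a)
    (hfb : sndPt d b ≤ f (fstPt d b)) :
    infDist a (graphF d f R) ≤ dist a b := by
  have hseg : ∀ w ∈ segment ℝ a b, fstPt d w ∈ ball 0 R := by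
    rintro _ ⟨s, t, hs, ht, hst, rfl⟩
    exact convex_ball 0 R ha hb hs ht hst
  refine infDist_le_dist_of_sign_change_on_segment (g := fun w => sndPt d w - f (fstPt d w))
    ((WithLp.continuous_snd 2 _ _).continuousOn.sub
      (hf.comp (WithLp.continuous_fst 2 _ _).continuousOn hseg))
    (sub_nonneg.2 hfa) (sub_nonpos.2 hfb) fun w hw hgw => ⟨fstPt d w, hseg w hw, ?_⟩
  show toPt d (fstPt d w) (f (fstPt d w)) = w
  rw [← sub_eq_zero.1 hgw]
  rfl

theorem exists_below_graphF_dist_le_of_mem_upperCone {d : ℕ} {Λ R : ℝ} (hΛ : 0 ≤ Λ)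
    {f : Euc (d - 1) → ℝ} (hf : LipschitzOnWith Λ.toNNReal f (ball 0 R)) {p z : Pt d}
    (hpR : fstPt d p ∈ ball 0 R) (hz : z ∈ upperCone d Λ p) {x : Euc (d - 1)}
    (hx : x ∈ ball 0 R) :
    ∃ b : Pt d, fstPt d b ∈ ball 0 R ∧ sndPt d b ≤ f (fstPt d b) ∧
      dist p b ≤ dist (toPt d x (f x)) z := by
  obtain ⟨c, hc, hcu, hce⟩ :=
    exists_smul_norm_le_and_norm_sub_smul_le (x - fstPt d p) (fstPt d z - fstPt d p)
  set y := x - c • (x - fstPt d p) with hy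
  have hyR : y ∈ ball 0 R := by
    rw [hy, ← neg_sub (fstPt d p), smul_neg, sub_neg_eq_add]
    exact (convex_ball 0 R).add_smul_sub_mem hx hpR hc
  refine ⟨toPt d y (f x - (sndPt d z - sndPt d p)), hyR, ?_, ?_⟩
  · have hlip := hf.dist_le_mul x hx y hyR
    rw [Real.coe_toNNReal _ hΛ, Real.dist_eq, dist_eq_norm, hy, sub_sub_cancel] at hlip
    have hz' : Λ * ‖fstPt d z - fstPt d p‖ < sndPt d z - sndPt d p := hz
    show f x - (sndPt d z - sndPt d p) ≤ f y
    linarith [le_abs_self (f x - f y), mul_le_mul_of_nonneg_left hcu hΛ]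
  · refine WithLp.prod_dist_le_of_L2 ?_ (le_of_eq ?_)
    · show dist (fstPt d p) y ≤ dist x (fstPt d z)
      calc dist (fstPt d p) y = ‖x - fstPt d p - c • (x - fstPt d p)‖ := by
            rw [dist_comm, dist_eq_norm, hy]; abel_nf
        _ ≤ dist x (fstPt d z) := by
            rwa [dist_eq_norm, ← sub_sub_sub_cancel_right x (fstPt d z) (fstPt d p)]
    · show dist (sndPt d p) (f x - (sndPt d z - sndPt d p)) = dist (f x) (sndPt d z)
      rw [Real.dist_eq, Real.dist_eq, abs_sub_comm]
      ring_nf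

theorem graph_far_from_upper_cone_general
    (d : ℕ) (Λ R r : ℝ) (hΛ : 0 ≤ Λ)
    (hrR : r < R)
    (f : Euc (d - 1) → ℝ)
    (hf : LipschitzOnWith Λ.toNNReal f (Metric.ball (0 : Euc (d - 1)) R))
    (δ : ℝ)
    (p : Pt d) (hp : p ∈ GSet d f R r δ) :
    ∀ q ∈ graphF d f R, δ ≤ Metric.infDist q (upperCone d Λ p) := by
  obtain ⟨hp₁, hp₂, rfl⟩ := hp
  have hpR : fstPt d p ∈ ball 0 R := ball_subset_ball hrR.le hp₁
  have hcone : (upperCone d Λ p).Nonempty :=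
    ⟨toPt d (fstPt d p) (sndPt d p + 1), by simp [upperCone, toPt, fstPt, sndPt]⟩
  rintro _ ⟨x, hx, rfl⟩
  refine (le_infDist hcone).2 fun z hz => ?_
  obtain ⟨b, hbR, hb_below, hpb⟩ :=
    exists_below_graphF_dist_le_of_mem_upperCone hΛ hf hpR hz hx
  exact (infDist_graphF_le_dist hf.continuousOn hpR hbR hp₂.le hb_below).trans hpb

/-- If `p ∈ G(δ)`, then every point of the graph `F̂` is at (Euclidean
infimum) distance at least `δ` from the open upper cone `𝒞_p⁺`. -/
theorem graph_far_from_upper_cone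
    (d : ℕ) (hd : 2 ≤ d) (Λ R r : ℝ) (hΛ : 0 ≤ Λ)
    (hr : 0 < r) (hrR : r < R)
    (f : Euc (d - 1) → ℝ)
    (hf : LipschitzOnWith Λ.toNNReal f (Metric.ball (0 : Euc (d - 1)) R))
    (δ : ℝ) (hδ : 0 < δ)
    (p : Pt d) (hp : p ∈ GSet d f R r δ) :
    ∀ q ∈ graphF d f R, δ ≤ Metric.infDist q (upperCone d Λ p) :=
  graph_far_from_upper_cone_general d Λ R r hΛ hrR f hf δ p hp
end
end

section
/- Let δ > 0 and p ∈ G(δ). Then the open two-sided cone 𝒞_p with vertex p is disjoint from G(δ): 𝒞_p ∩ G(δ) = ∅. -/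
open Metric Set

noncomputable section

/-- The open two-sided cone with vertex `p` and slope `Λ`:
`𝒞_p = p + {(x,y) : |y| > Λ|x|}`. -/
def twoSidedCone (d : ℕ) (Λ : ℝ) (p : Pt d) : Set (Pt d) :=
  { q | Λ * ‖fstPt d q - fstPt d p‖ < |sndPt d q - sndPt d p| }

/-! The two-sided cone relation is symmetric, so suppose `q ∈ G(δ)` lies in the open upward
cone of `p ∈ G(δ)`. A small ball around `q` then lies in the closed upward cone of `p`, so it
suffices to show `dist(z, F̂) ≥ δ` for every `z` in that closed cone: then `dist(q, F̂) > δ`.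

Since `p` lies above the graph and the open `δ`-ball about `p` misses `F̂`, every point over `B̂`
on or below the graph is at distance `≥ δ` from `p` (intermediate value theorem along the segment
joining it to `p`). Now let `w = (x, f x)` be a graph point. Shifting `w` down by `z - p` gives a
point on or below the graph at distance `dist(z, w)` from `p`, as `f` is `Λ`-Lipschitz, but its
base point may leave `B̂`. So replace that base point by a point `m` of the segment from the base
of `p` to `x` with `|m - x| ≤ |z_x - p_x|` and `|m - p_x| ≤ |z_x - x|`: the shifted point stays
below the graph, lies over `B̂`, and is still no farther than `dist(z, w)` from `p`. -/

lemma exists_mem_segment_dist_le_dist {E : Type*} [NormedAddCommGroup E] [NormedSpace ℝ E]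
    (a c x : E) : ∃ m ∈ segment ℝ a c, dist m a ≤ dist x c ∧ dist m c ≤ dist x a := by
  have hac : dist a c ≤ dist x a + dist x c := dist_triangle_left a c x
  have ha : 0 ≤ dist x a := dist_nonneg
  have hc : 0 ≤ dist x c := dist_nonneg
  rcases (add_nonneg ha hc).eq_or_lt with h | h
  · exact ⟨a, left_mem_segment ℝ a c, by simp, by linarith⟩
  -- the point dividing `[a, c]` in the ratio `dist x c : dist x a`
  refine ⟨AffineMap.lineMap a c (dist x c / (dist x a + dist x c)), ?_, ?_, ?_⟩
  · rw [segment_eq_image_lineMap]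
    exact mem_image_of_mem _
      ⟨by positivity, div_le_one_of_le₀ (le_add_of_nonneg_left ha) (add_nonneg ha hc)⟩
  · rw [dist_lineMap_left, Real.norm_of_nonneg (by positivity), div_mul_eq_mul_div,
      div_le_iff₀ h]
    exact mul_le_mul_of_nonneg_left hac hc
  · have h₁ : 1 - dist x c / (dist x a + dist x c) = dist x a / (dist x a + dist x c) := by
      field_simp
      ring
    rw [dist_lineMap_right, h₁, Real.norm_of_nonneg (by positivity), div_mul_eq_mul_div,
      div_le_iff₀ h]
    exact mul_le_mul_of_nonneg_left hac ha

lemma add_le_infDist_of_forall_mem_ball {E : Type*} [NormedAddCommGroup E] [NormedSpace ℝ E]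
    {s : Set E} (hs : s.Nonempty) {x : E} {ρ δ : ℝ} (hρ : 0 < ρ) (hδ : 0 < δ)
    (h : ∀ z ∈ ball x ρ, δ ≤ infDist z s) : ρ + δ ≤ infDist x s := by
  by_contra! hlt
  rw [← mem_thickening_iff_infDist_lt hs, ← thickening_thickening hρ hδ, mem_thickening_iff] at hlt
  obtain ⟨z, hz, hxz⟩ := hlt
  rw [mem_thickening_iff_infDist_lt hs] at hz
  exact (h z (mem_ball'.2 hxz)).not_gt hz

section Pt

variable {d : ℕ}

@[simp] lemma fstPt_toPt (x : Euc (d - 1)) (y : ℝ) : fstPt d (toPt d x y) = x := rfl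

@[simp] lemma sndPt_toPt (x : Euc (d - 1)) (y : ℝ) : sndPt d (toPt d x y) = y := rfl

lemma dist_fstPt_le (u v : Pt d) : dist (fstPt d u) (fstPt d v) ≤ dist u v :=
  WithLp.dist_fst_le u v

lemma dist_sndPt_le (u v : Pt d) : dist (sndPt d u) (sndPt d v) ≤ dist u v :=
  WithLp.dist_snd_le u v

lemma dist_le_dist_of_fstPt_le_of_sndPt_le {u v u' v' : Pt d}
    (h₁ : dist (fstPt d u) (fstPt d v) ≤ dist (fstPt d u') (fstPt d v'))
    (h₂ : dist (sndPt d u) (sndPt d v) ≤ dist (sndPt d u') (sndPt d v')) :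
    dist u v ≤ dist u' v' := by
  rw [WithLp.prod_dist_eq_of_L2, WithLp.prod_dist_eq_of_L2]
  gcongr
  exacts [h₁, h₂]

end Pt

section Graph

variable {d : ℕ} {f : Euc (d - 1) → ℝ} {R r δ : ℝ} {K : NNReal} {p : Pt d}

lemma toPt_mem_graphF {x : Euc (d - 1)} (hx : x ∈ ball 0 R) : toPt d x (f x) ∈ graphF d f R :=
  ⟨x, hx, rfl⟩

lemma le_dist_of_below_graphF (hf : ContinuousOn f (ball 0 R)) (hp : fstPt d p ∈ ball 0 R)
    (hpf : f (fstPt d p) < sndPt d p) (hδ : δ ≤ infDist p (graphF d f R)) {z : Pt d}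
    (hz : fstPt d z ∈ ball 0 R) (hzf : sndPt d z ≤ f (fstPt d z)) : δ ≤ dist z p := by
  set x : ℝ → Euc (d - 1) := ⇑(AffineMap.lineMap (k := ℝ) (fstPt d p) (fstPt d z))
  set y : ℝ → ℝ := ⇑(AffineMap.lineMap (k := ℝ) (sndPt d p) (sndPt d z))
  have hx : MapsTo x (Icc 0 1) (ball 0 R) := fun τ hτ => (convex_ball 0 R).lineMap_mem hp hz hτ
  have hcont : ContinuousOn (fun τ => y τ - f (x τ)) (Icc 0 1) :=
    AffineMap.lineMap_continuous.continuousOn.sub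
      (hf.comp AffineMap.lineMap_continuous.continuousOn hx)
  obtain ⟨τ, hτ, hτ0⟩ : ∃ τ ∈ Icc (0 : ℝ) 1, y τ - f (x τ) = 0 :=
    intermediate_value_Icc' zero_le_one hcont
      ⟨by simpa [x, y] using hzf, by simpa [x, y] using hpf.le⟩
  have hτ1 : ‖τ‖ ≤ 1 := by rw [Real.norm_of_nonneg hτ.1]; exact hτ.2
  calc δ ≤ dist p (toPt d (x τ) (f (x τ))) :=
        hδ.trans (infDist_le_dist_of_mem (toPt_mem_graphF (hx hτ)))
    _ ≤ dist p z := by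
      apply dist_le_dist_of_fstPt_le_of_sndPt_le
      · rw [fstPt_toPt, dist_left_lineMap]
        exact mul_le_of_le_one_left dist_nonneg hτ1
      · rw [sndPt_toPt, ← sub_eq_zero.1 hτ0, dist_left_lineMap]
        exact mul_le_of_le_one_left dist_nonneg hτ1
    _ = dist z p := dist_comm p z

lemma le_infDist_graphF_of_mul_dist_le (hf : LipschitzOnWith K f (ball 0 R))
    (hp : fstPt d p ∈ ball 0 R) (hpf : f (fstPt d p) < sndPt d p)
    (hδ : δ ≤ infDist p (graphF d f R)) {z : Pt d}
    (hz : K * dist (fstPt d z) (fstPt d p) ≤ sndPt d z - sndPt d p) :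
    δ ≤ infDist z (graphF d f R) := by
  rw [le_infDist ⟨_, toPt_mem_graphF hp⟩]
  rintro _ ⟨x, hx, rfl⟩
  obtain ⟨m, hm, hmp, hmx⟩ := exists_mem_segment_dist_le_dist (fstPt d p) x (fstPt d z)
  have hmR : m ∈ ball 0 R := (convex_ball 0 R).segment_subset hp hx hm
  set z' := toPt d m (f x - (sndPt d z - sndPt d p))
  have hz'f : sndPt d z' ≤ f (fstPt d z') := by
    have hlip := (abs_le.1 (Real.dist_eq _ _ ▸ hf.dist_le_mul x hx m hmR)).2
    have hK := mul_le_mul_of_nonneg_left (dist_comm m x ▸ hmx) K.coe_nonneg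
    simp only [z', fstPt_toPt, sndPt_toPt]
    linarith
  calc δ ≤ dist z' p := le_dist_of_below_graphF hf.continuousOn hp hpf hδ hmR hz'f
    _ ≤ dist z (toPt d x (f x)) := by
      refine dist_le_dist_of_fstPt_le_of_sndPt_le hmp (le_of_eq ?_)
      simp only [z', sndPt_toPt, Real.dist_eq, ← abs_neg (sndPt d z - f x)]
      ring_nf

lemma lt_infDist_graphF_of_mul_dist_lt (hf : LipschitzOnWith K f (ball 0 R)) (hδ₀ : 0 < δ)
    (hp : fstPt d p ∈ ball 0 R) (hpf : f (fstPt d p) < sndPt d p)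
    (hδ : δ ≤ infDist p (graphF d f R)) {q : Pt d}
    (hq : K * dist (fstPt d q) (fstPt d p) < sndPt d q - sndPt d p) :
    δ < infDist q (graphF d f R) := by
  obtain ⟨ρ, hρ, hρq⟩ : ∃ ρ > 0,
      (1 + K) * ρ = sndPt d q - sndPt d p - K * dist (fstPt d q) (fstPt d p) :=
    ⟨_, div_pos (sub_pos.2 hq) (by positivity), mul_div_cancel₀ _ (by positivity)⟩
  refine (lt_add_of_pos_left δ hρ).trans_le (add_le_infDist_of_forall_mem_ball (x := q)
    ⟨_, toPt_mem_graphF hp⟩ hρ hδ₀ fun z hz => le_infDist_graphF_of_mul_dist_le hf hp hpf hδ ?_)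
  have hzq := (mem_ball.1 hz).le
  have h₁ : dist (fstPt d z) (fstPt d q) ≤ ρ := (dist_fstPt_le z q).trans hzq
  have h₂ : |sndPt d z - sndPt d q| ≤ ρ := by
    rw [← Real.dist_eq]
    exact (dist_sndPt_le z q).trans hzq
  have h₃ : dist (fstPt d z) (fstPt d p) ≤ ρ + dist (fstPt d q) (fstPt d p) :=
    (dist_triangle _ (fstPt d q) _).trans (by linarith)
  nlinarith [(abs_le.1 h₂).1, mul_le_mul_of_nonneg_left h₃ K.coe_nonneg]

lemma notMem_GSet_of_mul_dist_lt (hf : LipschitzOnWith K f (ball 0 R)) (hδ : 0 < δ)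
    (hrR : r ≤ R) (hp : p ∈ GSet d f R r δ) {q : Pt d}
    (hq : K * dist (fstPt d q) (fstPt d p) < sndPt d q - sndPt d p) :
    q ∉ GSet d f R r δ := fun hqG =>
  (lt_infDist_graphF_of_mul_dist_lt hf hδ (ball_subset_ball hrR hp.1) hp.2.1 hp.2.2.ge hq).ne'
    hqG.2.2

end Graph

theorem cone_disjoint_level_set_general
    (d : ℕ) (Λ R r : ℝ) (hΛ : 0 ≤ Λ)
    (hrR : r < R)
    (f : Euc (d - 1) → ℝ)
    (hf : LipschitzOnWith Λ.toNNReal f (Metric.ball (0 : Euc (d - 1)) R))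
    (δ : ℝ) (hδ : 0 < δ)
    (p : Pt d) (hp : p ∈ GSet d f R r δ) :
    twoSidedCone d Λ p ∩ GSet d f R r δ = ∅ := by
  refine eq_empty_iff_forall_notMem.2 fun q ⟨hqp, hq⟩ => ?_
  have hqp : Λ.toNNReal * dist (fstPt d q) (fstPt d p) < |sndPt d q - sndPt d p| := by
    rw [Real.coe_toNNReal Λ hΛ, dist_eq_norm]
    exact hqp
  rcases lt_abs.1 hqp with hup | hdown
  · exact notMem_GSet_of_mul_dist_lt hf hδ hrR.le hp hup hq
  · refine notMem_GSet_of_mul_dist_lt hf hδ hrR.le hq ?_ hp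
    rw [dist_comm]
    linarith

/-- If `p ∈ G(δ)`, then the open two-sided cone with vertex `p` is
disjoint from `G(δ)`. -/
theorem cone_disjoint_level_set
    (d : ℕ) (hd : 2 ≤ d) (Λ R r : ℝ) (hΛ : 0 ≤ Λ)
    (hr : 0 < r) (hrR : r < R)
    (f : Euc (d - 1) → ℝ)
    (hf : LipschitzOnWith Λ.toNNReal f (Metric.ball (0 : Euc (d - 1)) R))
    (δ : ℝ) (hδ : 0 < δ)
    (p : Pt d) (hp : p ∈ GSet d f R r δ) :
    twoSidedCone d Λ p ∩ GSet d f R r δ = ∅ :=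
  cone_disjoint_level_set_general d Λ R r hΛ hrR f hf δ hδ p hp
end
end

section
/- For every δ > 0, the set G(δ) is the graph of a Λ-Lipschitz function over B: there exists a function g : B → ℝ which is Λ-Lipschitz and satisfies G(δ) = {(x, g(x)) : x ∈ B}. -/
/-!
Extend `f` to a `Λ`-Lipschitz function `F` on the whole space; over the closed ball of radius `R`
its graph lies in the closure of `F̂`, so distances to `F̂` do not change. Above the graph, the
points at distance `δ` from it form the upper boundary of the union of the closed `δ`-balls
centred on the graph, i.e. the graph of `g x = max_z (F z + √(δ² - |x - z|²))`. A point `(x, y)`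
with `F x < y < g x` is closer than `δ`: either it lies inside the ball around a maximising
`(z, F z)`, or `F` takes the value `y` on the segment from `x` to `z` (intermediate value
theorem). A point above `g x` lies outside every ball.

`g` is `Λ`-Lipschitz: to pass from `x₂` to `x₁`, slide the maximiser `z` for `x₂` towards `x₁`
until it is no farther from `x₁` than `z` is from `x₂`; the cap over the new point is at least
as high at `x₁`, and its centre is lower by at most `Λ |x₁ - x₂|`.
-/

open Metric Set

noncomputable section

open WithLp
open scoped NNReal

variable {E : Type*}

section PseudoMetricSpace

variable [PseudoMetricSpace E]

lemma dist_toLp_prod (x z : E) (y w : ℝ) :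
    dist (toLp 2 (x, y)) (toLp 2 (z, w)) = √(dist x z ^ 2 + (y - w) ^ 2) := by
  rw [prod_dist_eq_add (by norm_num), Real.sqrt_eq_rpow]
  norm_num [Real.dist_eq, sq_abs]

lemma dist_toLp_prod_le_iff {x z : E} {y w δ : ℝ} (hwy : w ≤ y) :
    dist (toLp 2 (x, y)) (toLp 2 (z, w)) ≤ δ ↔
      dist x z ≤ δ ∧ y ≤ w + √(δ ^ 2 - dist x z ^ 2) := by
  have hxz := dist_nonneg (x := x) (y := z)
  rw [dist_toLp_prod, Real.sqrt_le_iff, ← sub_le_iff_le_add']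
  constructor
  · rintro ⟨hδ, h⟩
    exact ⟨abs_le_of_sq_le_sq' (by nlinarith) hδ |>.2, Real.le_sqrt_of_sq_le (by linarith)⟩
  · rintro ⟨hxzδ, h⟩
    have hsq := (Real.le_sqrt (sub_nonneg.2 hwy) (by nlinarith)).1 h
    exact ⟨hxz.trans hxzδ, by linarith⟩

lemma dist_toLp_prod_lt_iff {x z : E} {y w δ : ℝ} (hwy : w ≤ y) :
    dist (toLp 2 (x, y)) (toLp 2 (z, w)) < δ ↔
      dist x z ≤ δ ∧ y < w + √(δ ^ 2 - dist x z ^ 2) := by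
  have hxz := dist_nonneg (x := x) (y := z)
  rw [← sub_lt_iff_lt_add', Real.lt_sqrt (sub_nonneg.2 hwy)]
  constructor
  · intro h
    have hδ : 0 < δ := dist_nonneg.trans_lt h
    rw [dist_toLp_prod, Real.sqrt_lt' hδ] at h
    exact ⟨abs_le_of_sq_le_sq' (by nlinarith) hδ.le |>.2, by linarith⟩
  · rintro ⟨hxzδ, h⟩
    have hδ : 0 < δ := lt_of_le_of_ne (hxz.trans hxzδ) (by rintro rfl; nlinarith)
    rw [dist_toLp_prod, Real.sqrt_lt' hδ]
    linarith

/-- The upper boundary of the union of the closed `δ`-balls centred at the points `(z, f z)`,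
`z ∈ s`: the ball around `(z, f z)` contributes its upper hemisphere over `closedBall z δ`. -/
def upperEnvelope (f : E → ℝ) (s : Set E) (δ : ℝ) (x : E) : ℝ :=
  sSup ((fun z => f z + √(δ ^ 2 - dist x z ^ 2)) '' (s ∩ closedBall x δ))

def l2Graph (f : E → ℝ) (s : Set E) : Set (WithLp 2 (E × ℝ)) :=
  (fun z => toLp 2 (z, f z)) '' s

variable {f : E → ℝ} {s : Set E} {δ : ℝ} {x : E}

lemma infDist_l2Graph_closure (hf : Continuous f) (p : WithLp 2 (E × ℝ)) (t : Set E) :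
    infDist p (l2Graph f (closure t)) = infDist p (l2Graph f t) := by
  have hsub : l2Graph f t ⊆ l2Graph f (closure t) := image_mono subset_closure
  have hcl : l2Graph f (closure t) ⊆ closure (l2Graph f t) :=
    image_closure_subset_closure_image (by fun_prop)
  rw [infDist, infDist, le_antisymm (infEDist_anti hsub) ?_]
  simpa only [infEDist_closure] using infEDist_anti hcl

lemma isGreatest_upperEnvelope (hs : IsCompact s) (hf : ContinuousOn f s) (hδ : 0 ≤ δ)
    (hx : x ∈ s) :
    IsGreatest ((fun z => f z + √(δ ^ 2 - dist x z ^ 2)) '' (s ∩ closedBall x δ))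
      (upperEnvelope f s δ x) := by
  refine IsCompact.isGreatest_sSup ?_ ⟨_, mem_image_of_mem _ ⟨hx, mem_closedBall_self hδ⟩⟩
  exact (hs.inter_right isClosed_closedBall).image_of_continuousOn
    ((hf.mono inter_subset_left).add (by fun_prop))

lemma exists_upperEnvelope_eq (hs : IsCompact s) (hf : ContinuousOn f s) (hδ : 0 ≤ δ)
    (hx : x ∈ s) :
    ∃ z ∈ s, dist x z ≤ δ ∧ f z + √(δ ^ 2 - dist x z ^ 2) = upperEnvelope f s δ x := by
  obtain ⟨z, ⟨hz, hzx⟩, hgz⟩ := (isGreatest_upperEnvelope hs hf hδ hx).1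
  exact ⟨z, hz, mem_closedBall'.1 hzx, hgz⟩

lemma le_upperEnvelope (hs : IsCompact s) (hf : ContinuousOn f s) (hδ : 0 ≤ δ) (hx : x ∈ s)
    {z : E} (hz : z ∈ s) (hxz : dist x z ≤ δ) :
    f z + √(δ ^ 2 - dist x z ^ 2) ≤ upperEnvelope f s δ x :=
  (isGreatest_upperEnvelope hs hf hδ hx).2 (mem_image_of_mem _ ⟨hz, mem_closedBall'.2 hxz⟩)

lemma add_le_upperEnvelope (hs : IsCompact s) (hf : ContinuousOn f s) (hδ : 0 ≤ δ)
    (hx : x ∈ s) : f x + δ ≤ upperEnvelope f s δ x := by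
  simpa [Real.sqrt_sq hδ] using le_upperEnvelope hs hf hδ hx hx (by rwa [dist_self])

lemma infDist_upperEnvelope (hs : IsCompact s) (hf : ContinuousOn f s) (hδ : 0 ≤ δ)
    (hx : x ∈ s) : infDist (toLp 2 (x, upperEnvelope f s δ x)) (l2Graph f s) = δ := by
  obtain ⟨z, hz, hxz, hgz⟩ := exists_upperEnvelope_eq hs hf hδ hx
  apply le_antisymm
  · refine (infDist_le_dist_of_mem (mem_image_of_mem _ hz)).trans ?_
    rw [dist_toLp_prod_le_iff (hgz ▸ le_add_of_nonneg_right (Real.sqrt_nonneg _))]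
    exact ⟨hxz, hgz.ge⟩
  · rw [le_infDist (⟨_, mem_image_of_mem _ hx⟩ : (l2Graph f s).Nonempty)]
    rintro _ ⟨w, hw, rfl⟩
    by_cases hxw : dist x w ≤ δ
    · have hcap := le_upperEnvelope hs hf hδ hx hw hxw
      rw [← not_lt, dist_toLp_prod_lt_iff (le_of_add_le_of_nonneg_left hcap (Real.sqrt_nonneg _))]
      exact fun h => h.2.not_ge hcap
    · rw [dist_toLp_prod]
      exact (not_le.1 hxw).le.trans (Real.le_sqrt_of_sq_le (le_add_of_nonneg_right (sq_nonneg _)))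

end PseudoMetricSpace

section NormedSpace

variable [NormedAddCommGroup E] [NormedSpace ℝ E] {f : E → ℝ} {s : Set E} {δ : ℝ} {x : E}

lemma infDist_l2Graph_lt_dist (hs : Convex ℝ s) (hf : ContinuousOn f s) {z : E} (hx : x ∈ s)
    (hz : z ∈ s) {y : ℝ} (hxy : f x < y) (hyz : y < f z) :
    infDist (toLp 2 (x, y)) (l2Graph f s) < dist x z := by
  have hseg : ContinuousOn (fun t : ℝ => f (AffineMap.lineMap x z t)) (Icc 0 1) :=
    hf.comp AffineMap.lineMap_continuous.continuousOn fun t ht => hs.lineMap_mem hx hz ht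
  obtain ⟨t, ⟨ht₀, ht₁⟩, hft⟩ :=
    intermediate_value_Ioo zero_le_one hseg (by simpa using And.intro hxy hyz)
  beta_reduce at hft
  have hxz : 0 < dist x z := dist_pos.2 fun h => (hxy.trans hyz).ne (congrArg f h)
  calc infDist (toLp 2 (x, y)) (l2Graph f s)
      ≤ dist (toLp 2 (x, y)) (toLp 2 (AffineMap.lineMap x z t, f (AffineMap.lineMap x z t))) :=
        infDist_le_dist_of_mem (mem_image_of_mem _ (hs.lineMap_mem hx hz ⟨ht₀.le, ht₁.le⟩))
    _ = t * dist x z := by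
        rw [dist_toLp_prod, hft, sub_self, dist_left_lineMap, Real.norm_of_nonneg ht₀.le]
        simpa using Real.sqrt_sq (by positivity)
    _ < dist x z := mul_lt_of_lt_one_left hxz ht₁

lemma Convex.exists_mem_dist_eq (hs : Convex ℝ s) {z : E} (hx : x ∈ s) (hz : z ∈ s) {b : ℝ}
    (hb₀ : 0 ≤ b) (hb : b < dist x z) : ∃ u ∈ s, dist x u = b ∧ dist u z = dist x z - b := by
  have hxz : 0 < dist x z := hb₀.trans_lt hb
  have ht : b / dist x z ∈ Icc (0 : ℝ) 1 := ⟨by positivity, div_le_one_of_le₀ hb.le hxz.le⟩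
  refine ⟨AffineMap.lineMap x z (b / dist x z), hs.lineMap_mem hx hz ht, ?_, ?_⟩
  · rw [dist_left_lineMap, Real.norm_of_nonneg ht.1, div_mul_cancel₀ _ hxz.ne']
  · rw [dist_lineMap_right, Real.norm_of_nonneg (sub_nonneg.2 ht.2), sub_mul, one_mul,
      div_mul_cancel₀ _ hxz.ne']

lemma le_upperEnvelope_of_infDist_le (hs : IsCompact s) (hconv : Convex ℝ s)
    (hf : ContinuousOn f s) (hx : x ∈ s) {y : ℝ} (hxy : f x < y)
    (h : infDist (toLp 2 (x, y)) (l2Graph f s) ≤ δ) : y ≤ upperEnvelope f s δ x := by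
  have hΓ : IsCompact (l2Graph f s) := hs.image_of_continuousOn (by fun_prop)
  obtain ⟨_, ⟨z, hz, rfl⟩, hdist⟩ :=
    hΓ.exists_infDist_eq_dist ⟨_, mem_image_of_mem _ hx⟩ (toLp 2 (x, y))
  have hzy : f z ≤ y := by
    by_contra! hyz
    refine (infDist_l2Graph_lt_dist hconv hf hx hz hxy hyz).not_ge ?_
    rw [hdist, dist_toLp_prod]
    exact Real.le_sqrt_of_sq_le (le_add_of_nonneg_right (sq_nonneg _))
  obtain ⟨hxz, hycap⟩ := (dist_toLp_prod_le_iff hzy).1 (hdist ▸ h)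
  exact hycap.trans (le_upperEnvelope hs hf (dist_nonneg.trans hxz) hx hz hxz)

lemma infDist_lt_of_lt_upperEnvelope (hs : IsCompact s) (hconv : Convex ℝ s)
    (hf : ContinuousOn f s) (hδ : 0 ≤ δ) (hx : x ∈ s) {y : ℝ} (hxy : f x < y)
    (hyg : y < upperEnvelope f s δ x) : infDist (toLp 2 (x, y)) (l2Graph f s) < δ := by
  obtain ⟨z, hz, hxz, hgz⟩ := exists_upperEnvelope_eq hs hf hδ hx
  rcases le_or_gt (f z) y with hzy | hyz
  · exact (infDist_le_dist_of_mem (mem_image_of_mem _ hz)).trans_lt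
      ((dist_toLp_prod_lt_iff hzy).2 ⟨hxz, hgz ▸ hyg⟩)
  · exact (infDist_l2Graph_lt_dist hconv hf hx hz hxy hyz).trans_le hxz

lemma infDist_l2Graph_eq_iff (hs : IsCompact s) (hconv : Convex ℝ s) (hf : ContinuousOn f s)
    (hδ : 0 ≤ δ) (hx : x ∈ s) {y : ℝ} (hxy : f x < y) :
    infDist (toLp 2 (x, y)) (l2Graph f s) = δ ↔ y = upperEnvelope f s δ x := by
  refine ⟨fun h => le_antisymm (le_upperEnvelope_of_infDist_le hs hconv hf hx hxy h.le) ?_, ?_⟩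
  · exact not_lt.1 fun hyg => (infDist_lt_of_lt_upperEnvelope hs hconv hf hδ hx hxy hyg).ne h
  · rintro rfl
    exact infDist_upperEnvelope hs hf hδ hx

lemma setOf_infDist_l2Graph_eq (hs : IsCompact s) (hconv : Convex ℝ s) (hf : ContinuousOn f s)
    (hδ : 0 < δ) {t : Set E} (ht : t ⊆ s) :
    {p : WithLp 2 (E × ℝ) | p.fst ∈ t ∧ f p.fst < p.snd ∧ infDist p (l2Graph f s) = δ} =
      l2Graph (upperEnvelope f s δ) t := by
  refine Subset.antisymm ?_ ?_
  · rintro ⟨x, y⟩ ⟨hx, hxy, hp⟩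
    change x ∈ t at hx
    change f x < y at hxy
    obtain rfl := (infDist_l2Graph_eq_iff hs hconv hf hδ.le (ht hx) hxy).1 hp
    exact mem_image_of_mem _ hx
  · rintro _ ⟨x, hx, rfl⟩
    exact ⟨hx, (lt_add_of_pos_right _ hδ).trans_le (add_le_upperEnvelope hs hf hδ.le (ht hx)),
      infDist_upperEnvelope hs hf hδ.le (ht hx)⟩

lemma lipschitzOnWith_upperEnvelope (hs : IsCompact s) (hconv : Convex ℝ s) {K : ℝ≥0}
    (hf : LipschitzOnWith K f s) (hδ : 0 ≤ δ) : LipschitzOnWith K (upperEnvelope f s δ) s := by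
  refine LipschitzOnWith.of_le_add_mul K fun x₂ hx₂ x₁ hx₁ => ?_
  obtain ⟨z, hz, hxz, hgz⟩ := exists_upperEnvelope_eq hs hf.continuousOn hδ hx₂
  obtain ⟨u, hu, hx₁u, hfu⟩ :
      ∃ u ∈ s, dist x₁ u ≤ dist x₂ z ∧ f z ≤ f u + K * dist x₂ x₁ := by
    rcases le_or_gt (dist x₁ z) (dist x₂ z) with hle | hlt
    · exact ⟨z, hz, hle, le_add_of_nonneg_right (by positivity)⟩
    obtain ⟨u, hu, hx₁u, huz⟩ := hconv.exists_mem_dist_eq hx₁ hz dist_nonneg hlt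
    refine ⟨u, hu, hx₁u.le, (hf.le_add_mul hz hu).trans ?_⟩
    rw [dist_comm z u, huz]
    gcongr
    linarith [dist_triangle x₁ x₂ z, dist_comm x₁ x₂]
  have hcap : √(δ ^ 2 - dist x₂ z ^ 2) ≤ √(δ ^ 2 - dist x₁ u ^ 2) :=
    Real.sqrt_le_sqrt (sub_le_sub_left (pow_le_pow_left₀ dist_nonneg hx₁u 2) _)
  calc upperEnvelope f s δ x₂ = f z + √(δ ^ 2 - dist x₂ z ^ 2) := hgz.symm
    _ ≤ (f u + √(δ ^ 2 - dist x₁ u ^ 2)) + K * dist x₂ x₁ := by linarith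
    _ ≤ upperEnvelope f s δ x₁ + K * dist x₂ x₁ := by
        gcongr
        exact le_upperEnvelope hs hf.continuousOn hδ hx₁ hu (hx₁u.trans hxz)

end NormedSpace

theorem level_set_is_lipschitz_graph_general
    (d : ℕ) (Λ R r : ℝ)
    (hrR : r < R)
    (f : Euc (d - 1) → ℝ)
    (hf : LipschitzOnWith Λ.toNNReal f (Metric.ball (0 : Euc (d - 1)) R))
    (δ : ℝ) (hδ : 0 < δ) :
    ∃ g : Euc (d - 1) → ℝ,
      LipschitzOnWith Λ.toNNReal g (Metric.ball (0 : Euc (d - 1)) r) ∧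
      GSet d f R r δ = (fun x => toPt d x (g x)) '' Metric.ball (0 : Euc (d - 1)) r := by
  obtain ⟨F, hF, hfF⟩ := hf.extend_real
  have hgraph : graphF d f R = l2Graph F (ball 0 R) := image_congr fun z hz => by rw [hfF hz]; rfl
  have hball : ball (0 : Euc (d - 1)) r ⊆ closedBall 0 R :=
    (ball_subset_ball hrR.le).trans ball_subset_closedBall
  have hK := isCompact_closedBall (0 : Euc (d - 1)) R
  have hconv := convex_closedBall (0 : Euc (d - 1)) R
  refine ⟨upperEnvelope F (closedBall 0 R) δ,
    (lipschitzOnWith_upperEnvelope hK hconv hF.lipschitzOnWith hδ.le).mono hball, ?_⟩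
  convert setOf_infDist_l2Graph_eq hK hconv hF.continuous.continuousOn hδ hball using 1
  · ext p
    refine and_congr_right fun hp => ?_
    have hpR : fstPt d p ∈ ball 0 R := ball_subset_ball hrR.le hp
    rw [hfF hpR, hgraph, ← infDist_l2Graph_closure hF.continuous,
      closure_ball 0 (pos_of_mem_ball hpR).ne']
    rfl
  · rfl

/-- For every `δ > 0`, the set `G(δ)` is the graph over `B` of a
`Λ`-Lipschitz function `g : B → ℝ`. -/
theorem level_set_is_lipschitz_graph
    (d : ℕ) (hd : 2 ≤ d) (Λ R r : ℝ) (hΛ : 0 ≤ Λ)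
    (hr : 0 < r) (hrR : r < R)
    (f : Euc (d - 1) → ℝ)
    (hf : LipschitzOnWith Λ.toNNReal f (Metric.ball (0 : Euc (d - 1)) R))
    (δ : ℝ) (hδ : 0 < δ) :
    ∃ g : Euc (d - 1) → ℝ,
      LipschitzOnWith Λ.toNNReal g (Metric.ball (0 : Euc (d - 1)) r) ∧
      GSet d f R r δ = (fun x => toPt d x (g x)) '' Metric.ball (0 : Euc (d - 1)) r :=
  level_set_is_lipschitz_graph_general d Λ R r hrR f hf δ hδ
end
end

section
/- Let A ⊂ ℝ^d (d ≥ 2) be a Λ-Lipschitz domain with bounded boundary. Then there exists δ₀ > 0 such that for every δ ∈ (0, δ₀], the set A_δ = {x ∈ A : dist(x, ∂A) > δ} is again a Λ-Lipschitz domain (with the same Lipschitz constant Λ), where dist(x, ∂A) is the Euclidean (infimum) distance from x to the boundary of A. -/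
open Metric Set

noncomputable section

/-- An open set `A ⊆ ℝ^d` is a `Λ`-Lipschitz domain if its boundary is bounded and near
each boundary point, after a rigid motion (an affine Euclidean isometry, here an isometric
equivalence of `ℝ^d` with `ℝ^{d-1} × ℝ`), `A` coincides with the open epigraph of a
`Λ`-Lipschitz function `f : ℝ^{d-1} → ℝ`. -/
def IsLipschitzDomain (d : ℕ) (Λ : ℝ) (A : Set (Euc d)) : Prop :=
  IsOpen A ∧ Bornology.IsBounded (frontier A) ∧
    ∀ p ∈ frontier A, ∃ V : Set (Euc d), IsOpen V ∧ p ∈ V ∧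
      ∃ T : Euc d ≃ᵢ Pt d, ∃ f : Euc (d - 1) → ℝ, LipschitzWith Λ.toNNReal f ∧
        T '' (A ∩ V) = (T '' V) ∩ { q : Pt d | f (fstPt d q) < sndPt d q }

/-!
Let `r` be a Lebesgue number of the cover of the compact boundary `∂A` by chart neighbourhoods,
and `δ₀ = r / 4`. A boundary point `q` of `A_δ` is at distance exactly `δ` from `∂A`, attained
at some `p ∈ ∂A`; the closed `δ`-balls around the points of `ball q δ` stay within `3δ < r` of
`p`, hence inside one chart, where `∂A` is the graph of a `Λ`-Lipschitz `f`. There the points of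
`A` farther than `δ` from that graph are exactly those strictly above the graph of
`x ↦ sup_{|w| ≤ δ} (f (x + w) + √(δ² - |w|²))`, the upper envelope of the spheres of radius `δ`
centred on the graph of `f`; as a supremum of translates of `f`, it is again `Λ`-Lipschitz.
-/

theorem frontier_inter_eq_of_inter_eq {X : Type*} [TopologicalSpace X] {s t U : Set X}
    (hU : IsOpen U) (h : s ∩ U = t ∩ U) : frontier s ∩ U = frontier t ∩ U := by
  rw [← frontier_inter_open_inter hU, h, frontier_inter_open_inter hU]

theorem image_inter_eq_of_forall_mem_iff {α β : Type*} (T : α → β) {S W : Set α} {P : Set β}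
    (h : ∀ u ∈ W, u ∈ S ↔ T u ∈ P) : T '' (S ∩ W) = T '' W ∩ P := by
  ext v
  constructor
  · rintro ⟨u, ⟨huS, huW⟩, rfl⟩
    exact ⟨mem_image_of_mem T huW, (h u huW).1 huS⟩
  · rintro ⟨⟨u, huW, rfl⟩, huP⟩
    exact ⟨u, ⟨(h u huW).2 huP, huW⟩, rfl⟩

section InnerParallelSet

variable {X : Type*} [PseudoMetricSpace X] {A : Set X} {δ : ℝ}

theorem lt_infDist_iff_forall_lt_dist [ProperSpace X] {s : Set X} (hs : IsClosed s)
    (hne : s.Nonempty) {x : X} : δ < infDist x s ↔ ∀ z ∈ s, δ < dist x z := by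
  refine ⟨fun h z hz => h.trans_le (infDist_le_dist_of_mem hz), fun h => ?_⟩
  obtain ⟨z, hz, hxz⟩ := hs.exists_infDist_eq_dist hne x
  exact hxz ▸ h z hz

theorem frontier_setOf_lt_infDist_subset (hδ : 0 < δ) :
    frontier {x ∈ A | δ < infDist x (frontier A)} ⊆ {x | infDist x (frontier A) = δ} := by
  intro x hx
  have hcont : Continuous fun x => infDist x (frontier A) := continuous_infDist_pt _
  rcases frontier_inter_subset A {x | δ < infDist x (frontier A)} hx with ⟨hxA, hxδ⟩ | ⟨-, hxδ⟩
  · have : δ ≤ infDist x (frontier A) := closure_lt_subset_le continuous_const hcont hxδ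
    rw [infDist_zero_of_mem hxA] at this
    linarith
  · exact (frontier_lt_subset_eq continuous_const hcont hxδ).symm

theorem isBounded_frontier_setOf_lt_infDist (hA : Bornology.IsBounded (frontier A))
    (hδ : 0 < δ) : Bornology.IsBounded (frontier {x ∈ A | δ < infDist x (frontier A)}) := by
  refine (hA.cthickening (δ := δ)).subset fun x hx => ?_
  have hxδ : infDist x (frontier A) = δ := frontier_setOf_lt_infDist_subset hδ hx
  have hfin : infEDist x (frontier A) ≠ ⊤ := fun htop => by
    rw [infDist, htop, ENNReal.toReal_top] at hxδ
    exact hδ.ne hxδ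
  rw [mem_cthickening_iff, ENNReal.le_ofReal_iff_toReal_le hfin hδ.le]
  exact hxδ.le

end InnerParallelSet

section Epigraph

variable {E : Type*}

def openEpigraph (f : E → ℝ) : Set (WithLp 2 (E × ℝ)) := {q | f q.fst < q.snd}

def graphL2 (f : E → ℝ) : Set (WithLp 2 (E × ℝ)) := {q | q.snd = f q.fst}

theorem frontier_openEpigraph [TopologicalSpace E] {f : E → ℝ} (hf : Continuous f) :
    frontier (openEpigraph f) = graphL2 f := by
  have hfst : Continuous fun q : WithLp 2 (E × ℝ) => f q.fst :=
    hf.comp (WithLp.prod_continuous_ofLp 2 E ℝ).fst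
  have hsnd : Continuous fun q : WithLp 2 (E × ℝ) => q.snd :=
    (WithLp.prod_continuous_ofLp 2 E ℝ).snd
  refine subset_antisymm (fun q hq => (frontier_lt_subset_eq hfst hsnd hq).symm) fun q hq => ?_
  have hopen : IsOpen (openEpigraph f) := isOpen_lt hfst hsnd
  rw [frontier, hopen.interior_eq]
  refine ⟨?_, fun h => (ne_of_lt h) hq.symm⟩
  have hvert : Continuous fun t : ℝ => WithLp.toLp 2 (q.fst, t) := by fun_prop
  have hq' : q.snd ∈ closure (Ioi (f q.fst)) := by rw [closure_Ioi, hq]; exact self_mem_Ici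
  exact map_mem_closure hvert hq' fun t ht => ht

end Epigraph

section SupConvolution

variable {E : Type*} [NormedAddCommGroup E] [ProperSpace E] {f : E → ℝ} {δ : ℝ}

def supConv (f : E → ℝ) (δ : ℝ) (x : E) : ℝ :=
  sSup ((fun w => f (x + w) + √(δ ^ 2 - ‖w‖ ^ 2)) '' closedBall 0 δ)

theorem isCompact_supConv_image (hf : Continuous f) (x : E) :
    IsCompact ((fun w => f (x + w) + √(δ ^ 2 - ‖w‖ ^ 2)) '' closedBall 0 δ) :=
  (isCompact_closedBall 0 δ).image (by fun_prop)

theorem le_supConv (hf : Continuous f) (x : E) {w : E} (hw : ‖w‖ ≤ δ) :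
    f (x + w) + √(δ ^ 2 - ‖w‖ ^ 2) ≤ supConv f δ x :=
  le_csSup (isCompact_supConv_image hf x).bddAbove
    (mem_image_of_mem _ (mem_closedBall_zero_iff.2 hw))

theorem exists_supConv_eq (hf : Continuous f) (hδ : 0 ≤ δ) (x : E) :
    ∃ w, ‖w‖ ≤ δ ∧ supConv f δ x = f (x + w) + √(δ ^ 2 - ‖w‖ ^ 2) := by
  obtain ⟨w, hw, hmax⟩ := (isCompact_supConv_image hf x).sSup_mem
    ((nonempty_closedBall.2 hδ).image _)
  exact ⟨w, mem_closedBall_zero_iff.1 hw, hmax.symm⟩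

theorem add_le_supConv (hf : Continuous f) (hδ : 0 ≤ δ) (x : E) : f x + δ ≤ supConv f δ x := by
  have := le_supConv hf x (w := 0) (by simpa using hδ)
  rwa [add_zero, norm_zero, zero_pow two_ne_zero, sub_zero, Real.sqrt_sq hδ] at this

theorem LipschitzWith.supConv {K : NNReal} (hf : LipschitzWith K f) (hδ : 0 ≤ δ) :
    LipschitzWith K (supConv f δ) := by
  refine LipschitzWith.of_le_add_mul K fun x x' => ?_
  obtain ⟨w, hw, hx⟩ := exists_supConv_eq hf.continuous hδ x
  have hshift : f (x + w) ≤ f (x' + w) + K * dist x x' := by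
    have := hf.dist_le_mul (x + w) (x' + w)
    rw [dist_add_right, Real.dist_eq] at this
    linarith [le_abs_self (f (x + w) - f (x' + w))]
  linarith [le_supConv hf.continuous x' hw]

theorem le_supConv_of_dist_le (hf : Continuous f) {q z : WithLp 2 (E × ℝ)} (hz : z ∈ graphL2 f)
    (h : dist q z ≤ δ) : q.snd ≤ supConv f δ q.fst := by
  rw [WithLp.prod_dist_eq_of_L2, Real.sqrt_le_iff, Real.dist_eq, sq_abs] at h
  obtain ⟨hδ, hsq⟩ := h
  set w := z.fst - q.fst
  have hw : ‖w‖ = dist q.fst z.fst := (dist_eq_norm' _ _).symm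
  have hvert : q.snd - f z.fst ≤ √(δ ^ 2 - ‖w‖ ^ 2) := by
    rw [← hz, hw]
    exact (le_abs_self _).trans (Real.abs_le_sqrt (by linarith))
  have hsup := le_supConv (δ := δ) hf q.fst (w := w) (by nlinarith [norm_nonneg w])
  rw [add_sub_cancel] at hsup
  linarith

end SupConvolution

section DistanceToGraph

variable {E : Type*} [NormedAddCommGroup E] [NormedSpace ℝ E] [ProperSpace E] {f : E → ℝ}
  {δ : ℝ}

theorem exists_dist_le_of_le_supConv (hf : Continuous f) (hδ : 0 ≤ δ) {q : WithLp 2 (E × ℝ)}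
    (hq : f q.fst < q.snd) (h : q.snd ≤ supConv f δ q.fst) : ∃ z ∈ graphL2 f, dist q z ≤ δ := by
  obtain ⟨w, hw, hsup⟩ := exists_supConv_eq hf hδ q.fst
  rcases le_or_gt (f (q.fst + w)) q.snd with hbelow | habove
  · refine ⟨WithLp.toLp 2 (q.fst + w, f (q.fst + w)), rfl, ?_⟩
    rw [WithLp.prod_dist_eq_of_L2, Real.sqrt_le_left hδ]
    simp only [WithLp.toLp_fst, WithLp.toLp_snd, dist_self_add_right, Real.dist_eq, sq_abs]
    have : (q.snd - f (q.fst + w)) ^ 2 ≤ δ ^ 2 - ‖w‖ ^ 2 :=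
      calc (q.snd - f (q.fst + w)) ^ 2 ≤ √(δ ^ 2 - ‖w‖ ^ 2) ^ 2 :=
            pow_le_pow_left₀ (sub_nonneg.2 hbelow) (by linarith) 2
        _ = δ ^ 2 - ‖w‖ ^ 2 := Real.sq_sqrt (by nlinarith [norm_nonneg w])
    linarith
  · obtain ⟨t, ⟨ht0, ht1⟩, ht⟩ : ∃ t ∈ Icc (0 : ℝ) 1, f (q.fst + t • w) = q.snd :=
      have hline : Continuous fun t : ℝ => f (q.fst + t • w) := by fun_prop
      intermediate_value_Icc zero_le_one hline.continuousOn
        ⟨by simpa using hq.le, by simpa using habove.le⟩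
    refine ⟨WithLp.toLp 2 (q.fst + t • w, q.snd), ht.symm, ?_⟩
    rw [WithLp.prod_dist_eq_of_L2]
    simp only [WithLp.toLp_fst, WithLp.toLp_snd, dist_self_add_right, dist_self]
    rw [zero_pow two_ne_zero, add_zero, Real.sqrt_sq (norm_nonneg _), norm_smul,
      Real.norm_of_nonneg ht0]
    nlinarith [norm_nonneg w]

theorem openEpigraph_supConv (hf : Continuous f) (hδ : 0 ≤ δ) :
    openEpigraph (supConv f δ) = {q ∈ openEpigraph f | ∀ z ∈ graphL2 f, δ < dist q z} := by
  ext q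
  refine ⟨fun h => ⟨?_, fun z hz => ?_⟩, fun ⟨hq, hfar⟩ => ?_⟩
  · change supConv f δ q.fst < q.snd at h
    show f q.fst < q.snd
    linarith [add_le_supConv hf hδ q.fst]
  · exact lt_of_not_ge fun hle => (le_supConv_of_dist_le hf hz hle).not_gt h
  · show supConv f δ q.fst < q.snd
    refine lt_of_not_ge fun hle => ?_
    obtain ⟨z, hz, hqz⟩ := exists_dist_le_of_le_supConv hf hδ hq hle
    exact (hfar z hz).not_ge hqz

end DistanceToGraph

theorem image_setOf_lt_infDist_inter_eq_of_chart {E X : Type*} [NormedAddCommGroup E]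
    [NormedSpace ℝ E] [ProperSpace E] [PseudoMetricSpace X] [ProperSpace X] {A V W : Set X}
    (hV : IsOpen V) (T : X ≃ᵢ WithLp 2 (E × ℝ)) {f : E → ℝ} (hf : Continuous f)
    (hT : T '' (A ∩ V) = T '' V ∩ openEpigraph f) (hA : (frontier A).Nonempty) {δ : ℝ}
    (hδ : 0 ≤ δ) (hW : ∀ u ∈ W, closedBall u δ ⊆ V) :
    T '' ({x ∈ A | δ < infDist x (frontier A)} ∩ W) = T '' W ∩ openEpigraph (supConv f δ) := by
  have hfrontier : T '' frontier A ∩ T '' V = graphL2 f ∩ T '' V := by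
    rw [← T.coe_toHomeomorph, T.toHomeomorph.image_frontier, T.coe_toHomeomorph,
      ← frontier_openEpigraph hf]
    refine frontier_inter_eq_of_inter_eq (T.toHomeomorph.isOpenMap V hV) ?_
    rw [← image_inter T.injective, hT, inter_comm]
  refine image_inter_eq_of_forall_mem_iff T fun u hu => ?_
  have huV : u ∈ V := hW u hu (mem_closedBall_self hδ)
  have hlocal : ∀ z, dist u z ≤ δ → (z ∈ frontier A ↔ T z ∈ graphL2 f) := fun z huz => by
    have hzV : T z ∈ T '' V := mem_image_of_mem T (hW u hu (mem_closedBall'.2 huz))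
    rw [← T.injective.mem_set_image]
    exact ⟨fun h => (hfrontier ▸ ⟨h, hzV⟩ : T z ∈ graphL2 f ∩ T '' V).1,
      fun h => (hfrontier.symm ▸ ⟨h, hzV⟩ : T z ∈ T '' frontier A ∩ T '' V).1⟩
  have hmemA : u ∈ A ↔ T u ∈ openEpigraph f := by
    have h : T u ∈ T '' (A ∩ V) ↔ u ∈ A ∩ V := T.injective.mem_set_image
    rw [hT] at h
    exact ⟨fun huA => (h.2 ⟨huA, huV⟩).2, fun hu => (h.1 ⟨mem_image_of_mem T huV, hu⟩).1⟩
  have hfar : (∀ z ∈ frontier A, δ < dist u z) ↔ ∀ z ∈ graphL2 f, δ < dist (T u) z := by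
    rw [T.surjective.forall]
    refine forall_congr' fun z => ?_
    rw [T.dist_eq]
    by_cases huz : dist u z ≤ δ
    · rw [hlocal z huz]
    · simp only [not_le.1 huz, implies_true]
  rw [openEpigraph_supConv hf hδ]
  exact and_congr hmemA ((lt_infDist_iff_forall_lt_dist isClosed_frontier hA).trans hfar)

theorem inner_set_is_lipschitz_domain_general
    (d : ℕ) (Λ : ℝ)
    (A : Set (Euc d)) (hA : IsLipschitzDomain d Λ A) :
    ∃ δ₀ > 0, ∀ δ ∈ Set.Ioc (0 : ℝ) δ₀,
      IsLipschitzDomain d Λ { x ∈ A | δ < Metric.infDist x (frontier A) } := by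
  obtain ⟨hAopen, hAbd, hchart⟩ := hA
  choose V hVopen hpV T f hf hTV using fun p : frontier A => hchart p p.2
  obtain ⟨r, hr, hleb⟩ := lebesgue_number_lemma_of_metric
    (isCompact_of_isClosed_isBounded isClosed_frontier hAbd) hVopen
    fun p hp => mem_iUnion.2 ⟨⟨p, hp⟩, hpV ⟨p, hp⟩⟩
  refine ⟨r / 4, by positivity, fun δ ⟨hδ, hδr⟩ => ⟨?_, ?_, fun q hq => ?_⟩⟩
  · exact hAopen.inter (isOpen_lt continuous_const (continuous_infDist_pt _))
  · exact isBounded_frontier_setOf_lt_infDist hAbd hδ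
  have hqδ : infDist q (frontier A) = δ := frontier_setOf_lt_infDist_subset hδ hq
  have hF : (frontier A).Nonempty :=
    nonempty_iff_ne_empty.2 fun h => by rw [h, infDist_empty] at hqδ; exact hδ.ne hqδ
  obtain ⟨p, hp, hqp⟩ := isClosed_frontier.exists_infDist_eq_dist hF q
  obtain ⟨i, hi⟩ := hleb p hp
  refine ⟨ball q δ, isOpen_ball, mem_ball_self hδ, T i, supConv (f i) δ, (hf i).supConv hδ.le,
    image_setOf_lt_infDist_inter_eq_of_chart (hVopen i) (T i) (hf i).continuous (hTV i) hF hδ.le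
      fun u hu z hz => hi ?_⟩
  rw [mem_ball] at hu ⊢
  rw [mem_closedBall] at hz
  linarith [dist_triangle4 z u q p]

/-- If `A ⊆ ℝ^d` is a `Λ`-Lipschitz domain with bounded boundary, then
there is `δ₀ > 0` such that for every `δ ∈ (0, δ₀]`, the inner set
`A_δ = {x ∈ A : dist(x, ∂A) > δ}` is again a `Λ`-Lipschitz domain. -/
theorem inner_set_is_lipschitz_domain
    (d : ℕ) (hd : 2 ≤ d) (Λ : ℝ) (hΛ : 0 ≤ Λ)
    (A : Set (Euc d)) (hA : IsLipschitzDomain d Λ A) :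
    ∃ δ₀ > 0, ∀ δ ∈ Set.Ioc (0 : ℝ) δ₀,
      IsLipschitzDomain d Λ { x ∈ A | δ < Metric.infDist x (frontier A) } :=
  inner_set_is_lipschitz_domain_general d Λ A hA
end
end

section
/- Let B ⊂ ℝ^{d-1} be an open ball. There exists a constant C > 0, depending only on B and d, such that for every h > 0 and every function v that is continuously differentiable on an open neighborhood of the closure of the cylinder C_h = B × (−h, h) ⊂ ℝ^d, one has C·∫_{C_h} v(x)² dx ≤ h²·∫_{C_h} |∇v(x)|² dx + h·∫_B v(x̂, h)² dx̂, where the first two integrals are with respect to Lebesgue measure on ℝ^d, |∇v| is the Euclidean norm of the gradient, and the last integral is over the top face B × {h} with respect to Lebesgue measure on ℝ^{d-1}. -/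
open Metric Set MeasureTheory

noncomputable section

instance (d : ℕ) : MeasurableSpace (Pt d) := borel _
instance (d : ℕ) : BorelSpace (Pt d) := ⟨rfl⟩

/-- Lebesgue measure on `ℝ^d = ℝ^{d-1} × ℝ`, transported through the canonical
identification. -/
def lebPt (d : ℕ) : Measure (Pt d) :=
  Measure.map (WithLp.equiv 2 (Euc (d - 1) × ℝ)).symm volume

/-- The flat open cylinder `B × (-h, h)` over the ball `B = B(x₀, ρ) ⊆ ℝ^{d-1}`. -/
def flatCyl (d : ℕ) (x₀ : Euc (d - 1)) (ρ h : ℝ) : Set (Pt d) :=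
  { p | fstPt d p ∈ Metric.ball x₀ ρ ∧ sndPt d p ∈ Set.Ioo (-h) h }

/-!
On a vertical segment `{x̂} × [-h, h]` write `φ(t)² = φ(h)² - ∫ₜʰ 2φφ'` and bound
`-2φφ' ≤ φ²/(4h) + 4h φ'²`. Integrating in `t` absorbs half of `∫ φ²` into the left-hand side,
so `∫ φ² ≤ 4h φ(h)² + 16h² ∫ φ'²`. Integrating over `x̂ ∈ B` (Fubini) and using `|∂ₜ v| ≤ |∇v|`
gives the inequality with `C = 1/16`.
-/

theorem neg_two_mul_le_sq_div_add_mul_sq {L x y g : ℝ} (hL : 0 < L) (hy : |y| ≤ g) :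
    -(2 * x * y) ≤ x ^ 2 / (2 * L) + 2 * L * g ^ 2 := by
  have hyg : y ^ 2 ≤ g ^ 2 := sq_le_sq' (abs_le.mp hy).1 (abs_le.mp hy).2
  rw [div_add' _ _ _ (by positivity), le_div_iff₀ (by positivity)]
  nlinarith [sq_nonneg (x + 2 * L * y), mul_le_mul_of_nonneg_left hyg (sq_nonneg (2 * L))]

theorem sq_le_sq_right_add_setIntegral {a b t : ℝ} (ht : t ∈ Icc a b) {φ φ' F : ℝ → ℝ}
    (hφ : ∀ s ∈ Icc a b, HasDerivAt φ (φ' s) s) (hφ' : ContinuousOn φ' (Icc a b))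
    (hF : IntegrableOn F (Icc a b)) (hF₀ : ∀ s ∈ Icc a b, 0 ≤ F s)
    (hφF : ∀ s ∈ Icc a b, -(2 * φ s * φ' s) ≤ F s) :
    φ t ^ 2 ≤ φ b ^ 2 + ∫ s in Ioo a b, F s := by
  have hsub : Icc t b ⊆ Icc a b := Icc_subset_Icc_left ht.1
  have hsub' : uIcc t b ⊆ Icc a b := by rwa [uIcc_of_le ht.2]
  have hφc : ContinuousOn φ (Icc a b) := fun s hs => (hφ s hs).continuousAt.continuousWithinAt
  have hD : IntervalIntegrable (fun s => 2 * φ s * φ' s) volume t b :=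
    (((continuousOn_const.mul hφc).mul hφ').mono hsub').intervalIntegrable
  have hFTC : ∫ s in t..b, 2 * φ s * φ' s = φ b ^ 2 - φ t ^ 2 :=
    intervalIntegral.integral_eq_sub_of_hasDerivAt
      (fun s hs => by simpa [mul_comm] using (hφ s (hsub' hs)).pow 2) hD
  have hmono : ∫ s in t..b, -(2 * φ s * φ' s) ≤ ∫ s in t..b, F s :=
    intervalIntegral.integral_mono_on ht.2 hD.neg (hF.mono_set hsub').intervalIntegrable
      fun s hs => hφF s (hsub hs)
  have hextend : ∫ s in t..b, F s ≤ ∫ s in Ioo a b, F s := by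
    rw [intervalIntegral.integral_of_le ht.2, ← integral_Ioc_eq_integral_Ioo]
    exact setIntegral_mono_set (hF.mono_set Ioc_subset_Icc_self)
      ((ae_restrict_mem measurableSet_Ioc).mono fun s hs => hF₀ s (Ioc_subset_Icc_self hs))
      (Ioc_subset_Ioc_left ht.1).eventuallyLE
  rw [intervalIntegral.integral_neg, hFTC] at hmono
  linarith

theorem setIntegral_sq_le_of_abs_deriv_le {a b : ℝ} (hab : a < b) {φ φ' G : ℝ → ℝ}
    (hφ : ∀ t ∈ Icc a b, HasDerivAt φ (φ' t) t) (hφ' : ContinuousOn φ' (Icc a b))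
    (hG : ContinuousOn G (Icc a b)) (hφ'G : ∀ t ∈ Icc a b, |φ' t| ≤ G t) :
    ∫ t in Ioo a b, φ t ^ 2 ≤
      2 * (b - a) * φ b ^ 2 + 4 * (b - a) ^ 2 * ∫ t in Ioo a b, G t ^ 2 := by
  have hL : 0 < b - a := sub_pos.mpr hab
  have hφc : ContinuousOn φ (Icc a b) := fun s hs => (hφ s hs).continuousAt.continuousWithinAt
  have hφ2 : IntegrableOn (fun t => φ t ^ 2) (Icc a b) :=
    (hφc.pow 2).integrableOn_compact isCompact_Icc
  have hG2 : IntegrableOn (fun t => G t ^ 2) (Icc a b) :=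
    (hG.pow 2).integrableOn_compact isCompact_Icc
  have hpoint : ∀ t ∈ Icc a b, φ t ^ 2 ≤
      φ b ^ 2 + ∫ s in Ioo a b, (φ s ^ 2 / (2 * (b - a)) + 2 * (b - a) * G s ^ 2) :=
    fun t ht => sq_le_sq_right_add_setIntegral ht hφ hφ'
      ((hφ2.div_const _).add (hG2.const_mul _)) (fun s _ => by positivity)
      fun s hs => neg_two_mul_le_sq_div_add_mul_sq hL (hφ'G s hs)
  have hφ2' := hφ2.mono_set Ioo_subset_Icc_self
  have hG2' := hG2.mono_set Ioo_subset_Icc_self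
  have hint := setIntegral_mono_on hφ2' (integrableOn_const (by simp)) measurableSet_Ioo
    fun t ht => hpoint t (Ioo_subset_Icc_self ht)
  rw [integral_add (hφ2'.div_const _) (hG2'.const_mul _), integral_div, integral_const_mul,
    setIntegral_const, smul_eq_mul, Real.volume_real_Ioo_of_le hab.le] at hint
  have habsorb : (b - a) * ((∫ t in Ioo a b, φ t ^ 2) / (2 * (b - a))) =
      (∫ t in Ioo a b, φ t ^ 2) / 2 := by
    field_simp
  linarith

theorem setIntegral_prod_sq_le_of_abs_deriv_le {X : Type*} [MeasurableSpace X] {μ : Measure X}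
    [SFinite μ] {B : Set X} (hB : MeasurableSet B) {a b : ℝ} (hab : a < b) {u u' G : X → ℝ → ℝ}
    (hu : ∀ x ∈ B, ∀ t ∈ Icc a b, HasDerivAt (u x) (u' x t) t)
    (hu' : ∀ x ∈ B, ContinuousOn (u' x) (Icc a b)) (hG : ∀ x ∈ B, ContinuousOn (G x) (Icc a b))
    (hu'G : ∀ x ∈ B, ∀ t ∈ Icc a b, |u' x t| ≤ G x t)
    (hu_int : IntegrableOn (fun q => u q.1 q.2 ^ 2) (B ×ˢ Ioo a b) (μ.prod volume))
    (hG_int : IntegrableOn (fun q => G q.1 q.2 ^ 2) (B ×ˢ Ioo a b) (μ.prod volume))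
    (hub_int : IntegrableOn (fun x => u x b ^ 2) B μ) :
    ∫ q in B ×ˢ Ioo a b, u q.1 q.2 ^ 2 ∂(μ.prod volume) ≤
      2 * (b - a) * ∫ x in B, u x b ^ 2 ∂μ +
        4 * (b - a) ^ 2 * ∫ q in B ×ˢ Ioo a b, G q.1 q.2 ^ 2 ∂(μ.prod volume) := by
  have slice_int {f : X → ℝ → ℝ}
      (hf : IntegrableOn (fun q => f q.1 q.2) (B ×ˢ Ioo a b) (μ.prod volume)) :
      IntegrableOn (fun x => ∫ t in Ioo a b, f x t) B μ := by
    rw [IntegrableOn, ← Measure.prod_restrict] at hf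
    exact hf.integral_prod_left
  rw [setIntegral_prod _ hu_int, setIntegral_prod _ hG_int, ← integral_const_mul,
    ← integral_const_mul, ← integral_add (hub_int.const_mul _)]
  · refine setIntegral_mono_on ?_ ?_ hB fun x hx =>
      setIntegral_sq_le_of_abs_deriv_le hab (hu x hx) (hu' x hx) (hG x hx) (hu'G x hx)
    · exact slice_int hu_int
    · exact (hub_int.const_mul _).add ((slice_int hG_int).const_mul _)
  · exact (slice_int hG_int).const_mul _

theorem ContDiffOn.continuousOn_gradient {F : Type*} [NormedAddCommGroup F]
    [InnerProductSpace ℝ F] [CompleteSpace F] {f : F → ℝ} {U : Set F}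
    (hf : ContDiffOn ℝ 1 f U) (hU : IsOpen U) : ContinuousOn (gradient f) U :=
  (InnerProductSpace.toDual ℝ F).symm.continuous.comp_continuousOn
    (hf.continuousOn_fderiv_of_isOpen hU le_rfl)

def toPtEquiv (d : ℕ) : (Euc (d - 1) × ℝ) ≃L[ℝ] Pt d :=
  (WithLp.prodContinuousLinearEquiv 2 ℝ (Euc (d - 1)) ℝ).symm

section Cylinder

variable {d : ℕ}

theorem continuous_toPt : Continuous (fun q : Euc (d - 1) × ℝ => toPt d q.1 q.2) :=
  (toPtEquiv d).continuous

theorem hasDerivAt_comp_toPt {v : Pt d → ℝ} {x : Euc (d - 1)} {t : ℝ}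
    (hv : DifferentiableAt ℝ v (toPt d x t)) :
    HasDerivAt (fun s => v (toPt d x s)) (inner ℝ (gradient v (toPt d x t)) (toPt d 0 1)) t := by
  have h := (hv.hasFDerivAt.comp (x, t) (toPtEquiv d).hasFDerivAt).comp_hasDerivAt t
      ((hasDerivAt_const t x).prodMk (hasDerivAt_id t))
  rw [inner_gradient_left]
  exact h

theorem norm_toPt_zero_one : ‖toPt d 0 1‖ = 1 := by
  simp [toPt]

theorem setIntegral_flatCyl (x₀ : Euc (d - 1)) (ρ h : ℝ) (f : Pt d → ℝ) :
    ∫ p in flatCyl d x₀ ρ h, f p ∂lebPt d =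
      ∫ q in ball x₀ ρ ×ˢ Ioo (-h) h, f (toPt d q.1 q.2) :=
  setIntegral_map_equiv (toPtEquiv d).toHomeomorph.toMeasurableEquiv _ _

theorem toPt_mem_closure_flatCyl {x₀ : Euc (d - 1)} {ρ h : ℝ} (hρ : 0 < ρ) (hh : 0 < h)
    {x : Euc (d - 1)} (hx : x ∈ closedBall x₀ ρ) {t : ℝ} (ht : t ∈ Icc (-h) h) :
    toPt d x t ∈ closure (flatCyl d x₀ ρ h) := by
  have hcl : closure (ball x₀ ρ ×ˢ Ioo (-h) h) = closedBall x₀ ρ ×ˢ Icc (-h) h := by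
    rw [closure_prod_eq, closure_ball x₀ hρ.ne', closure_Ioo (by linarith)]
  have hq : (x, t) ∈ closure ((fun q : Euc (d - 1) × ℝ => toPt d q.1 q.2) ⁻¹' flatCyl d x₀ ρ h) :=
    hcl ▸ ⟨hx, ht⟩
  exact continuous_toPt.closure_preimage_subset _ hq

theorem integrableOn_ball_prod_Ioo_of_continuousOn {x₀ : Euc (d - 1)} {ρ h : ℝ}
    {f : Pt d → ℝ} {U : Set (Pt d)} (hf : ContinuousOn f U)
    (hK : ∀ x ∈ closedBall x₀ ρ, ∀ t ∈ Icc (-h) h, toPt d x t ∈ U) :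
    IntegrableOn (fun q : Euc (d - 1) × ℝ => f (toPt d q.1 q.2)) (ball x₀ ρ ×ˢ Ioo (-h) h) :=
  ((hf.comp continuous_toPt.continuousOn fun q hq => hK q.1 hq.1 q.2 hq.2).integrableOn_compact
    ((isCompact_closedBall _ _).prod isCompact_Icc)).mono_set
      (prod_mono ball_subset_closedBall Ioo_subset_Icc_self)

theorem setIntegral_flatCyl_sq_le {x₀ : Euc (d - 1)} {ρ h : ℝ} (hρ : 0 < ρ) (hh : 0 < h)
    {v : Pt d → ℝ} {U : Set (Pt d)} (hU : IsOpen U) (hcl : closure (flatCyl d x₀ ρ h) ⊆ U)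
    (hv : ContDiffOn ℝ 1 v U) :
    ∫ p in flatCyl d x₀ ρ h, v p ^ 2 ∂lebPt d ≤
      4 * h * (∫ z in ball x₀ ρ, v (toPt d z h) ^ 2) +
        16 * h ^ 2 * ∫ p in flatCyl d x₀ ρ h, ‖gradient v p‖ ^ 2 ∂lebPt d := by
  have hK : ∀ x ∈ closedBall x₀ ρ, ∀ t ∈ Icc (-h) h, toPt d x t ∈ U :=
    fun x hx t ht => hcl (toPt_mem_closure_flatCyl hρ hh hx ht)
  have hgrad := hv.continuousOn_gradient hU
  have slice_continuousOn {f : Pt d → ℝ} (hf : ContinuousOn f U) {x : Euc (d - 1)}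
      (hx : x ∈ ball x₀ ρ) : ContinuousOn (fun t => f (toPt d x t)) (Icc (-h) h) :=
    hf.comp (continuous_toPt.comp (continuous_const.prodMk continuous_id)).continuousOn
      fun t ht => hK x (ball_subset_closedBall hx) t ht
  have top_integrableOn : IntegrableOn (fun z => v (toPt d z h) ^ 2) (ball x₀ ρ) := by
    have hc : ContinuousOn (fun z => v (toPt d z h) ^ 2) (closedBall x₀ ρ) :=
      (hv.continuousOn.pow 2).comp
        (continuous_toPt.comp (continuous_id.prodMk continuous_const)).continuousOn
        fun z hz => hK z hz h ⟨by linarith, le_rfl⟩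
    exact (hc.integrableOn_compact (isCompact_closedBall _ _)).mono_set ball_subset_closedBall
  rw [setIntegral_flatCyl, setIntegral_flatCyl, Measure.volume_eq_prod]
  calc _ ≤ 2 * (h - -h) * (∫ z in ball x₀ ρ, v (toPt d z h) ^ 2) +
        4 * (h - -h) ^ 2 * ∫ q in ball x₀ ρ ×ˢ Ioo (-h) h, ‖gradient v (toPt d q.1 q.2)‖ ^ 2
          ∂(volume.prod volume) :=
      setIntegral_prod_sq_le_of_abs_deriv_le measurableSet_ball (by linarith)
        (u := fun x t => v (toPt d x t))
        (fun x hx t ht => hasDerivAt_comp_toPt ((hv.differentiableOn one_ne_zero).differentiableAt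
          (hU.mem_nhds (hK x (ball_subset_closedBall hx) t ht))))
        (fun x hx => slice_continuousOn (hgrad.inner continuousOn_const) hx)
        (fun x hx => slice_continuousOn hgrad.norm hx)
        (fun x _ t _ => (abs_real_inner_le_norm _ _).trans_eq (by rw [norm_toPt_zero_one, mul_one]))
        (integrableOn_ball_prod_Ioo_of_continuousOn (hv.continuousOn.pow 2) hK)
        (integrableOn_ball_prod_Ioo_of_continuousOn (hgrad.norm.pow 2) hK) top_integrableOn
    _ = _ := by ring

end Cylinder

theorem poincare_flat_cylinder_general
    (d : ℕ) (x₀ : Euc (d - 1)) (ρ : ℝ) (hρ : 0 < ρ) :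
    ∃ C > 0, ∀ h : ℝ, 0 < h → ∀ v : Pt d → ℝ,
      (∃ U : Set (Pt d), IsOpen U ∧ closure (flatCyl d x₀ ρ h) ⊆ U ∧ ContDiffOn ℝ 1 v U) →
      C * ∫ p in flatCyl d x₀ ρ h, (v p) ^ 2 ∂(lebPt d) ≤
        h ^ 2 * ∫ p in flatCyl d x₀ ρ h, ‖gradient v p‖ ^ 2 ∂(lebPt d)
          + h * ∫ z in Metric.ball x₀ ρ, (v (toPt d z h)) ^ 2 := by
  refine ⟨1 / 16, by norm_num, fun h hh v ⟨U, hU, hcl, hv⟩ => ?_⟩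
  have key := setIntegral_flatCyl_sq_le hρ hh hU hcl hv
  have htop : 0 ≤ h * ∫ z in ball x₀ ρ, v (toPt d z h) ^ 2 :=
    mul_nonneg hh.le (setIntegral_nonneg measurableSet_ball fun z _ => sq_nonneg _)
  linarith

/-- Poincaré-type inequality on flat cylinders: there is `C > 0`,
depending only on the ball `B` and `d`, such that for every half-height `h > 0` and every
`v` of class `C¹` on a neighborhood of the closed cylinder `B × [-h, h]`,
`C ∫_{C_h} v² ≤ h² ∫_{C_h} |∇v|² + h ∫_B v(·, h)²`. -/
theorem poincare_flat_cylinder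
    (d : ℕ) (hd : 2 ≤ d) (x₀ : Euc (d - 1)) (ρ : ℝ) (hρ : 0 < ρ) :
    ∃ C > 0, ∀ h : ℝ, 0 < h → ∀ v : Pt d → ℝ,
      (∃ U : Set (Pt d), IsOpen U ∧ closure (flatCyl d x₀ ρ h) ⊆ U ∧ ContDiffOn ℝ 1 v U) →
      C * ∫ p in flatCyl d x₀ ρ h, (v p) ^ 2 ∂(lebPt d) ≤
        h ^ 2 * ∫ p in flatCyl d x₀ ρ h, ‖gradient v p‖ ^ 2 ∂(lebPt d)
          + h * ∫ z in Metric.ball x₀ ρ, (v (toPt d z h)) ^ 2 :=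
  poincare_flat_cylinder_general d x₀ ρ hρ
end
end

section
/- Let Ω ⊂ ℝ^d be a bounded open set and c₀, c₁ > 0. Then there exists a constant C > 0, depending only on c₀, c₁, d and the Lebesgue measure of Ω, with the following property: for every ε ∈ (0, 1], every δ > 0, every measurable set M ⊂ Ω with Lebesgue measure 𝓛(M) ≤ c₀·δ, every measurable weight μ : Ω → ℝ satisfying μ(x) ≥ ε^{-1} for a.e. x ∈ Ω \ M and μ(x) ≥ c₁·δ for a.e. x ∈ M, and every continuously differentiable function v : Ω → ℝ, one has C·( ∫_Ω |∇v(x)| dx )² ≤ ∫_Ω μ(x)·|∇v(x)|² dx, where |∇v| denotes the Euclidean norm of the gradient. (This is the weighted lower bound C‖∇v‖²_{L¹(Ω)} ≤ B_{ε,δ}[v,v] underlying the first estimate of Theorem 3 on the lower bound for the first eigenvalue.) -/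
open Metric Set MeasureTheory
open scoped ENNReal

noncomputable section

/-! By Cauchy–Schwarz applied to `|∇v| = μ^{-1/2} · (μ^{1/2} |∇v|)`,
`(∫_Ω |∇v|)² ≤ (∫_Ω μ⁻¹) · ∫_Ω μ |∇v|²`. Off `M` we have `μ⁻¹ ≤ ε ≤ 1`, and on `M` we have
`μ⁻¹ ≤ (c₁ δ)⁻¹` while `𝓛(M) ≤ c₀ δ`; the two factors of `δ` cancel, so
`∫_Ω μ⁻¹ ≤ 𝓛(Ω) + c₀ / c₁` and `C = (𝓛(Ω) + c₀ / c₁)⁻¹` works. -/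

theorem measurable_gradient {𝕜 F : Type*} [RCLike 𝕜] [NormedAddCommGroup F]
    [InnerProductSpace 𝕜 F] [CompleteSpace F] [MeasurableSpace F] [BorelSpace F] (f : F → 𝕜) :
    Measurable (gradient f) :=
  (InnerProductSpace.toDual 𝕜 F).symm.continuous.measurable.comp (measurable_fderiv 𝕜 f)

section LIntegralInv

variable {α : Type*} [MeasurableSpace α] {ν : Measure α}

theorem ENNReal.lintegral_mul_sq_le {f g : α → ℝ≥0∞} (hf : AEMeasurable f ν)
    (hg : AEMeasurable g ν) :
    (∫⁻ x, f x * g x ∂ν) ^ 2 ≤ (∫⁻ x, f x ^ 2 ∂ν) * ∫⁻ x, g x ^ 2 ∂ν := by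
  have hHolder := ENNReal.lintegral_mul_le_Lp_mul_Lq ν .two_two hf hg
  simp only [Pi.mul_apply, ENNReal.rpow_two, one_div] at hHolder
  calc (∫⁻ x, f x * g x ∂ν) ^ 2
      ≤ ((∫⁻ x, f x ^ 2 ∂ν) ^ (2⁻¹ : ℝ) * (∫⁻ x, g x ^ 2 ∂ν) ^ (2⁻¹ : ℝ)) ^ 2 :=
        pow_le_pow_left' hHolder 2
    _ = (∫⁻ x, f x ^ 2 ∂ν) * ∫⁻ x, g x ^ 2 ∂ν := by
        simp only [mul_pow, ← ENNReal.rpow_two, ENNReal.rpow_inv_rpow two_ne_zero]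

theorem ENNReal.lintegral_sq_le_lintegral_inv_mul_lintegral_mul_sq {a w : α → ℝ≥0∞}
    (ha : AEMeasurable a ν) (hw : AEMeasurable w ν) (ha₀ : ∀ᵐ x ∂ν, a x ≠ 0)
    (ha_top : ∀ᵐ x ∂ν, a x ≠ ∞) :
    (∫⁻ x, w x ∂ν) ^ 2 ≤ (∫⁻ x, (a x)⁻¹ ∂ν) * ∫⁻ x, a x * w x ^ 2 ∂ν := by
  have hsqrt_sq (b : ℝ≥0∞) : (b ^ (2⁻¹ : ℝ)) ^ 2 = b := by
    rw [← ENNReal.rpow_two, ENNReal.rpow_inv_rpow two_ne_zero]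
  have hw_eq : ∫⁻ x, w x ∂ν = ∫⁻ x, (a x)⁻¹ ^ (2⁻¹ : ℝ) * (a x ^ (2⁻¹ : ℝ) * w x) ∂ν := by
    refine lintegral_congr_ae ?_
    filter_upwards [ha₀, ha_top] with x hx₀ hx_top
    rw [← mul_assoc, ← ENNReal.mul_rpow_of_nonneg _ _ (by norm_num),
      ENNReal.inv_mul_cancel hx₀ hx_top, ENNReal.one_rpow, one_mul]
  calc (∫⁻ x, w x ∂ν) ^ 2
      ≤ (∫⁻ x, ((a x)⁻¹ ^ (2⁻¹ : ℝ)) ^ 2 ∂ν) * ∫⁻ x, (a x ^ (2⁻¹ : ℝ) * w x) ^ 2 ∂ν := by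
        rw [hw_eq]
        exact ENNReal.lintegral_mul_sq_le (ha.inv.pow_const _) ((ha.pow_const _).mul hw)
    _ = (∫⁻ x, (a x)⁻¹ ∂ν) * ∫⁻ x, a x * w x ^ 2 ∂ν := by
        simp only [mul_pow, hsqrt_sq]

theorem setLIntegral_inv_le_inv_mul_measure {f : α → ℝ≥0∞} {s : Set α} {c : ℝ≥0∞}
    (hs : MeasurableSet s) (hf : ∀ᵐ x ∂ν, x ∈ s → c ≤ f x) :
    ∫⁻ x in s, (f x)⁻¹ ∂ν ≤ c⁻¹ * ν s := by
  rw [← setLIntegral_const]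
  exact setLIntegral_mono_ae' hs (hf.mono fun x hx hxs ↦ ENNReal.inv_le_inv.2 (hx hxs))

theorem setLIntegral_inv_le_of_le_on_sdiff_of_le_on {f : α → ℝ≥0∞} {s t : Set α}
    {b c : ℝ≥0∞} (hs : MeasurableSet s) (ht : MeasurableSet t) (hts : t ⊆ s)
    (hf_sdiff : ∀ᵐ x ∂ν, x ∈ s \ t → b ≤ f x) (hf : ∀ᵐ x ∂ν, x ∈ t → c ≤ f x) :
    ∫⁻ x in s, (f x)⁻¹ ∂ν ≤ b⁻¹ * ν s + c⁻¹ * ν t := by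
  rw [← sdiff_union_of_subset hts, lintegral_union ht disjoint_sdiff_left,
    sdiff_union_of_subset hts]
  gcongr
  · exact (setLIntegral_inv_le_inv_mul_measure (hs.diff ht) hf_sdiff).trans
      (by gcongr; exact sdiff_subset)
  · exact setLIntegral_inv_le_inv_mul_measure ht hf

theorem setLIntegral_inv_ofReal_le_measure_add_div {Ω M : Set α} {μ : α → ℝ} {ε δ c₀ c₁ : ℝ}
    (hΩ : MeasurableSet Ω) (hΩ_fin : ν Ω ≠ ∞) (hM : MeasurableSet M) (hMΩ : M ⊆ Ω)
    (hMvol : ν M ≤ ENNReal.ofReal (c₀ * δ)) (hε : ε ∈ Ioc 0 1) (hδ : 0 < δ) (hc₀ : 0 ≤ c₀)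
    (hc₁ : 0 < c₁) (hμ_out : ∀ᵐ x ∂ν, x ∈ Ω \ M → ε⁻¹ ≤ μ x)
    (hμ_in : ∀ᵐ x ∂ν, x ∈ M → c₁ * δ ≤ μ x) :
    ∫⁻ x in Ω, (ENNReal.ofReal (μ x))⁻¹ ∂ν ≤ ENNReal.ofReal ((ν Ω).toReal + c₀ / c₁) := by
  calc ∫⁻ x in Ω, (ENNReal.ofReal (μ x))⁻¹ ∂ν
      ≤ (ENNReal.ofReal ε⁻¹)⁻¹ * ν Ω + (ENNReal.ofReal (c₁ * δ))⁻¹ * ν M :=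
        setLIntegral_inv_le_of_le_on_sdiff_of_le_on hΩ hM hMΩ
          (hμ_out.mono fun x hx hxs ↦ ENNReal.ofReal_le_ofReal (hx hxs))
          (hμ_in.mono fun x hx hxs ↦ ENNReal.ofReal_le_ofReal (hx hxs))
    _ ≤ ENNReal.ofReal ε * ν Ω + ENNReal.ofReal (c₀ * δ) / ENNReal.ofReal (c₁ * δ) := by
        rw [← ENNReal.ofReal_inv_of_pos (inv_pos.2 hε.1), inv_inv, ENNReal.div_eq_inv_mul]
        gcongr
    _ ≤ ENNReal.ofReal ((ν Ω).toReal + c₀ / c₁) := by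
        rw [← ENNReal.ofReal_div_of_pos (mul_pos hc₁ hδ), mul_div_mul_right _ _ hδ.ne',
          ENNReal.ofReal_add ENNReal.toReal_nonneg (div_nonneg hc₀ hc₁.le),
          ENNReal.ofReal_toReal hΩ_fin]
        gcongr
        exact mul_le_of_le_one_left' (ENNReal.ofReal_le_one.2 hε.2)

end LIntegralInv

/-- Weighted lower bound `C ‖∇v‖²_{L¹(Ω)} ≤ B_{ε,δ}[v,v]`: for a bounded
open `Ω ⊆ ℝ^d` and `c₀, c₁ > 0` there is `C > 0` such that for all `ε ∈ (0,1]`, `δ > 0`,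
every measurable `M ⊆ Ω` with `𝓛(M) ≤ c₀ δ`, every measurable weight `μ` with
`μ ≥ ε⁻¹` a.e. on `Ω \ M` and `μ ≥ c₁ δ` a.e. on `M`, and every `C¹` function `v` on `Ω`,
`C (∫_Ω |∇v|)² ≤ ∫_Ω μ |∇v|²`. -/
theorem weighted_gradient_L1_lower_bound
    (d : ℕ) (Ω : Set (Euc d)) (hΩo : IsOpen Ω) (hΩb : Bornology.IsBounded Ω)
    (c₀ c₁ : ℝ) (hc₀ : 0 < c₀) (hc₁ : 0 < c₁) :
    ∃ C > 0, ∀ ε ∈ Set.Ioc (0 : ℝ) 1, ∀ δ : ℝ, 0 < δ →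
      ∀ M : Set (Euc d), MeasurableSet M → M ⊆ Ω →
        volume M ≤ ENNReal.ofReal (c₀ * δ) →
      ∀ μ : Euc d → ℝ, Measurable μ →
        (∀ᵐ x, x ∈ Ω \ M → ε⁻¹ ≤ μ x) →
        (∀ᵐ x, x ∈ M → c₁ * δ ≤ μ x) →
      ∀ v : Euc d → ℝ, ContDiffOn ℝ 1 v Ω →
        ENNReal.ofReal C * (∫⁻ x in Ω, ENNReal.ofReal ‖gradient v x‖) ^ 2 ≤
          ∫⁻ x in Ω, ENNReal.ofReal (μ x * ‖gradient v x‖ ^ 2) := by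
  set K := (volume Ω).toReal + c₀ / c₁
  have hK : 0 < K := by positivity
  refine ⟨K⁻¹, inv_pos.2 hK, ?_⟩
  intro ε hε δ hδ M hM hMΩ hMvol μ hμ hμ_out hμ_in v _
  have hμ_pos : ∀ᵐ x ∂volume.restrict Ω, 0 < μ x := by
    rw [ae_restrict_iff' hΩo.measurableSet]
    filter_upwards [hμ_out, hμ_in] with x hx_out hx_in hx
    by_cases hxM : x ∈ M
    · exact (mul_pos hc₁ hδ).trans_le (hx_in hxM)
    · exact (inv_pos.2 hε.1).trans_le (hx_out ⟨hx, hxM⟩)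
  have hinv := setLIntegral_inv_ofReal_le_measure_add_div hΩo.measurableSet
    hΩb.measure_lt_top.ne hM hMΩ hMvol hε hδ hc₀.le hc₁ hμ_out hμ_in
  have hCS := ENNReal.lintegral_sq_le_lintegral_inv_mul_lintegral_mul_sq
    (ν := volume.restrict Ω) (w := fun x ↦ ENNReal.ofReal ‖gradient v x‖)
    hμ.ennreal_ofReal.aemeasurable (measurable_gradient v).norm.ennreal_ofReal.aemeasurable
    (hμ_pos.mono fun x hx ↦ ENNReal.ofReal_pos.2 hx |>.ne')
    (ae_of_all _ fun _ ↦ ENNReal.ofReal_ne_top)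
  have hweight : ∫⁻ x in Ω, ENNReal.ofReal (μ x) * ENNReal.ofReal ‖gradient v x‖ ^ 2 =
      ∫⁻ x in Ω, ENNReal.ofReal (μ x * ‖gradient v x‖ ^ 2) :=
    lintegral_congr_ae <| hμ_pos.mono fun x hx ↦ by
      dsimp only
      rw [ENNReal.ofReal_mul hx.le, ENNReal.ofReal_pow (norm_nonneg _)]
  rw [ENNReal.ofReal_inv_of_pos hK, ENNReal.inv_mul_le_iff (by positivity) ENNReal.ofReal_ne_top,
    ← hweight]
  exact hCS.trans (by gcongr)
end
end

section
/- Let Ω ⊂ ℝ^d be a measurable set, K ≥ 1 an integer, and B¹, …, B^K ⊂ Ω pairwise disjoint measurable sets with Lebesgue measures satisfying 0 < 𝓛(B^k) ≤ M̄ for all k. Let φ₁, …, φ_K ∈ L²(Ω) be orthonormal, and let η ≥ 0 satisfy η·(K² + K) ≤ 1/2. Assume that for all j, k ∈ {1,…,K}: ∫_{Ω \ ⋃_k B^k} φ_j² dx ≤ η and ∫_{B^k} (φ_j − ⟨φ_j⟩_{B^k})² dx ≤ η, where ⟨φ⟩_B = (1/𝓛(B))·∫_B φ dx denotes the average of φ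 over B. Define the matrix Σ ∈ ℝ^{K×K} by Σ_{kj} = ⟨φ_j⟩_{B^k}. Then for every β ∈ ℝ^K one has |Σβ| ≥ (2M̄)^{-1/2}·|β| (Euclidean norms); moreover, if in addition 𝓛(B^k) ≥ m > 0 for all k, then |Σβ| ≤ m^{-1/2}·|β|. (This is the matrix-of-averages invertibility lemma, Lemma 3 of the paper, in quantitative conditional form.) -/
open Metric Set MeasureTheory
open scoped ENNReal

noncomputable section

/-! With `ψ = ∑ j, β j • φ j`, orthonormality gives `∫_Ω ψ² = |β|²`, and the average of `ψ` over
`B k` is `(Σ β) k`. Splitting `Ω` into the `B k` and the rest, and each `∫_{B k} ψ²` into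
`𝓛(B k) (Σ β)_k²` plus the oscillation of `ψ` on `B k`, writes `|β|²` as the exterior mass of `ψ`
plus `∑ k, 𝓛(B k) (Σ β)_k²` plus the oscillations. By Cauchy–Schwarz the exterior mass and each
oscillation are at most `K η |β|²`, so the smallness of `η` leaves `|β|² ≤ |β|²/2 + M̄ |Σ β|²`;
dropping the nonnegative terms instead gives `m |Σ β|² ≤ |β|²`. -/

section

variable {α : Type*} [MeasurableSpace α] {μ : Measure α} {ι κ : Type*} [Fintype ι]

theorem setIntegral_sq_eq_measureReal_mul_sq_setAverage_add {s : Set α} {f : α → ℝ}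
    (hs : μ s ≠ ∞) (hf : MemLp f 2 (μ.restrict s)) :
    ∫ x in s, f x ^ 2 ∂μ =
      μ.real s * (⨍ x in s, f x ∂μ) ^ 2 + ∫ x in s, (f x - ⨍ x in s, f x ∂μ) ^ 2 ∂μ := by
  have : IsFiniteMeasure (μ.restrict s) := isFiniteMeasure_restrict.2 hs
  set c := ⨍ x in s, f x ∂μ
  have hmean : ∫ x in s, f x ∂μ = μ.real s * c := (measure_smul_setAverage f hs).symm
  have hf1 : Integrable (fun x => 2 * c * f x) (μ.restrict s) :=
    (hf.integrable one_le_two).const_mul _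
  have hf2 : Integrable (fun x => f x ^ 2 - 2 * c * f x) (μ.restrict s) :=
    hf.integrable_sq.sub hf1
  have hexpand : ∀ x, (f x - c) ^ 2 = f x ^ 2 - 2 * c * f x + c ^ 2 := fun x => by ring
  simp only [hexpand]
  rw [integral_add hf2 (integrable_const _),
    integral_sub hf.integrable_sq hf1, integral_const_mul, hmean, integral_const, smul_eq_mul,
    measureReal_restrict_apply_univ]
  ring

theorem setIntegral_eq_setIntegral_sdiff_iUnion_add_sum {E : Type*} [NormedAddCommGroup E]
    [NormedSpace ℝ E] {Ω : Set α} {B : ι → Set α} {f : α → E}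
    (hB : ∀ k, MeasurableSet (B k)) (hBΩ : ∀ k, B k ⊆ Ω)
    (hdisj : Pairwise (Function.onFun Disjoint B)) (hf : IntegrableOn f Ω μ) :
    ∫ x in Ω, f x ∂μ = ∫ x in Ω \ ⋃ k, B k, f x ∂μ + ∑ k, ∫ x in B k, f x ∂μ := by
  rw [setIntegral_sdiff (MeasurableSet.iUnion hB) hf (iUnion_subset hBΩ),
    integral_iUnion_fintype hB hdisj fun k => hf.mono_set (hBΩ k), sub_add_cancel]

theorem integral_sq_sum_mul_of_orthonormal [DecidableEq ι]
    {φ : ι → α → ℝ} (hφ : ∀ i, MemLp (φ i) 2 μ)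
    (horth : ∀ i j, ∫ x, φ i x * φ j x ∂μ = if i = j then 1 else 0) (β : ι → ℝ) :
    ∫ x, (∑ i, β i * φ i x) ^ 2 ∂μ = ∑ i, β i ^ 2 := by
  have hint : ∀ i j, Integrable (fun x => β i * β j * (φ i x * φ j x)) μ := fun i j =>
    ((hφ i).integrable_mul (hφ j)).const_mul _
  calc ∫ x, (∑ i, β i * φ i x) ^ 2 ∂μ
      = ∫ x, ∑ i, ∑ j, β i * β j * (φ i x * φ j x) ∂μ := by
        congr 1; ext x; rw [sq, Finset.sum_mul_sum]
        exact Finset.sum_congr rfl fun i _ => Finset.sum_congr rfl fun j _ => by ring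
    _ = ∑ i, ∑ j, β i * β j * ∫ x, φ i x * φ j x ∂μ := by
        rw [integral_finsetSum _ fun i _ => integrable_finsetSum _ fun j _ => hint i j]
        simp only [integral_finsetSum _ fun j _ => hint _ j, integral_const_mul]
    _ = ∑ i, β i ^ 2 := by simp [horth, sq]

theorem integral_sq_sum_mul_le {g : ι → α → ℝ}
    (hg : ∀ i, MemLp (g i) 2 μ) {η : ℝ} (hη : ∀ i, ∫ x, g i x ^ 2 ∂μ ≤ η) (β : ι → ℝ) :
    ∫ x, (∑ i, β i * g i x) ^ 2 ∂μ ≤ (∑ i, β i ^ 2) * (Fintype.card ι * η) := by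
  calc ∫ x, (∑ i, β i * g i x) ^ 2 ∂μ ≤ ∫ x, (∑ i, β i ^ 2) * ∑ i, g i x ^ 2 ∂μ :=
        integral_mono ((memLp_finsetSum _ fun i _ => (hg i).const_mul (β i)).integrable_sq)
          ((integrable_finsetSum _ fun i _ => (hg i).integrable_sq).const_mul _)
          fun x => Finset.sum_mul_sq_le_sq_mul_sq _ _ _
    _ = (∑ i, β i ^ 2) * ∑ i, ∫ x, g i x ^ 2 ∂μ := by
        rw [integral_const_mul, integral_finsetSum _ fun i _ => (hg i).integrable_sq]
    _ ≤ (∑ i, β i ^ 2) * (Fintype.card ι * η) := by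
        gcongr
        simpa using Finset.sum_le_sum fun i (_ : i ∈ Finset.univ) => hη i

theorem setAverage_sum_mul {s : Set α} {φ : ι → α → ℝ}
    (hφ : ∀ i, IntegrableOn (φ i) s μ) (β : ι → ℝ) :
    ⨍ x in s, ∑ i, β i * φ i x ∂μ = ∑ i, β i * ⨍ x in s, φ i x ∂μ := by
  simp only [setAverage_eq, smul_eq_mul, integral_finsetSum _ fun i _ => (hφ i).const_mul (β i),
    integral_const_mul, Finset.mul_sum]
  exact Finset.sum_congr rfl fun i _ => mul_left_comm _ _ _

def averageMatrix (μ : Measure α) (B : κ → Set α) (φ : ι → α → ℝ) : Matrix κ ι ℝ :=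
  Matrix.of fun k j => ⨍ x in B k, φ j x ∂μ

theorem averageMatrix_mulVec_apply {B : κ → Set α} {φ : ι → α → ℝ} {k : κ}
    (hφ : ∀ j, IntegrableOn (φ j) (B k) μ) (β : ι → ℝ) :
    (averageMatrix μ B φ).mulVec β k = ⨍ x in B k, ∑ j, β j * φ j x ∂μ := by
  rw [setAverage_sum_mul hφ]
  simp only [Matrix.mulVec, dotProduct, averageMatrix, Matrix.of_apply, mul_comm]

variable [Fintype κ] {Ω : Set α} {B : κ → Set α} {φ : ι → α → ℝ}

theorem sum_sq_eq_setIntegral_sdiff_add_sum_averageMatrix_mulVec [DecidableEq ι]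
    (hB : ∀ k, MeasurableSet (B k)) (hBΩ : ∀ k, B k ⊆ Ω)
    (hdisj : Pairwise (Function.onFun Disjoint B)) (hfin : ∀ k, μ (B k) ≠ ∞)
    (hφ : ∀ j, MemLp (φ j) 2 (μ.restrict Ω))
    (horth : ∀ i j, ∫ x in Ω, φ i x * φ j x ∂μ = if i = j then 1 else 0) (β : ι → ℝ) :
    ∑ j, β j ^ 2 = ∫ x in Ω \ ⋃ k, B k, (∑ j, β j * φ j x) ^ 2 ∂μ +
      ∑ k, (μ.real (B k) * (averageMatrix μ B φ).mulVec β k ^ 2 +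
        ∫ x in B k, (∑ j, β j * φ j x - (averageMatrix μ B φ).mulVec β k) ^ 2 ∂μ) := by
  have hψ : MemLp (fun x => ∑ j, β j * φ j x) 2 (μ.restrict Ω) :=
    memLp_finsetSum _ fun j _ => (hφ j).const_mul _
  rw [← integral_sq_sum_mul_of_orthonormal hφ horth β,
    setIntegral_eq_setIntegral_sdiff_iUnion_add_sum hB hBΩ hdisj hψ.integrable_sq]
  congr 1
  refine Finset.sum_congr rfl fun k _ => ?_
  have : IsFiniteMeasure (μ.restrict (B k)) := isFiniteMeasure_restrict.2 (hfin k)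
  have hBk : μ.restrict (B k) ≤ μ.restrict Ω := Measure.restrict_mono (hBΩ k) le_rfl
  rw [averageMatrix_mulVec_apply fun j => ((hφ j).mono_measure hBk).integrable one_le_two]
  exact setIntegral_sq_eq_measureReal_mul_sq_setAverage_add (hfin k) (hψ.mono_measure hBk)

theorem sum_sq_le_two_mul_sum_sq_averageMatrix_mulVec [DecidableEq ι]
    (hB : ∀ k, MeasurableSet (B k)) (hBΩ : ∀ k, B k ⊆ Ω)
    (hdisj : Pairwise (Function.onFun Disjoint B)) (hfin : ∀ k, μ (B k) ≠ ∞)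
    {M : ℝ} (hBM : ∀ k, μ.real (B k) ≤ M) (hφ : ∀ j, MemLp (φ j) 2 (μ.restrict Ω))
    (horth : ∀ i j, ∫ x in Ω, φ i x * φ j x ∂μ = if i = j then 1 else 0) {η : ℝ}
    (hη : η * (Fintype.card ι * Fintype.card κ + Fintype.card ι) ≤ 1 / 2)
    (hext : ∀ j, ∫ x in Ω \ ⋃ k, B k, φ j x ^ 2 ∂μ ≤ η)
    (hosc : ∀ j k, ∫ x in B k, (φ j x - averageMatrix μ B φ k j) ^ 2 ∂μ ≤ η) (β : ι → ℝ) :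
    ∑ j, β j ^ 2 ≤ 2 * M * ∑ k, (averageMatrix μ B φ).mulVec β k ^ 2 := by
  set A := averageMatrix μ B φ
  set S := ∑ j, β j ^ 2
  have hextψ : ∫ x in Ω \ ⋃ k, B k, (∑ j, β j * φ j x) ^ 2 ∂μ ≤ S * (Fintype.card ι * η) :=
    integral_sq_sum_mul_le
      (fun j => (hφ j).mono_measure (Measure.restrict_mono sdiff_subset le_rfl)) hext β
  have hoscψ : ∀ k, ∫ x in B k, (∑ j, β j * φ j x - A.mulVec β k) ^ 2 ∂μ ≤
      S * (Fintype.card ι * η) := by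
    intro k
    have : IsFiniteMeasure (μ.restrict (B k)) := isFiniteMeasure_restrict.2 (hfin k)
    have hdiff : ∀ x, ∑ j, β j * φ j x - A.mulVec β k = ∑ j, β j * (φ j x - A k j) := fun x => by
      simp [Matrix.mulVec, dotProduct, mul_sub, mul_comm]
    simp only [hdiff]
    exact integral_sq_sum_mul_le (fun j => ((hφ j).mono_measure
      (Measure.restrict_mono (hBΩ k) le_rfl)).sub (memLp_const _)) (fun j => hosc j k) β
  have hmass : ∑ k, μ.real (B k) * A.mulVec β k ^ 2 ≤ M * ∑ k, A.mulVec β k ^ 2 := by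
    rw [Finset.mul_sum]; gcongr with k; exact hBM k
  have hosc_sum := Finset.sum_le_sum fun k (_ : k ∈ Finset.univ) => hoscψ k
  simp only [Finset.sum_const, Finset.card_univ, nsmul_eq_mul] at hosc_sum
  have hsmall := mul_le_mul_of_nonneg_left hη (by positivity : 0 ≤ S)
  have hE := sum_sq_eq_setIntegral_sdiff_add_sum_averageMatrix_mulVec hB hBΩ hdisj hfin hφ horth β
  rw [Finset.sum_add_distrib] at hE
  linarith

theorem mul_sum_sq_averageMatrix_mulVec_le_sum_sq [DecidableEq ι]
    (hB : ∀ k, MeasurableSet (B k)) (hBΩ : ∀ k, B k ⊆ Ω)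
    (hdisj : Pairwise (Function.onFun Disjoint B)) (hfin : ∀ k, μ (B k) ≠ ∞)
    (hφ : ∀ j, MemLp (φ j) 2 (μ.restrict Ω))
    (horth : ∀ i j, ∫ x in Ω, φ i x * φ j x ∂μ = if i = j then 1 else 0)
    {m : ℝ} (hm : ∀ k, m ≤ μ.real (B k)) (β : ι → ℝ) :
    m * ∑ k, (averageMatrix μ B φ).mulVec β k ^ 2 ≤ ∑ j, β j ^ 2 := by
  rw [sum_sq_eq_setIntegral_sdiff_add_sum_averageMatrix_mulVec hB hBΩ hdisj hfin hφ horth β,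
    Finset.mul_sum]
  refine le_add_of_nonneg_of_le (integral_nonneg fun x => sq_nonneg _)
    (Finset.sum_le_sum fun k _ => ?_)
  exact le_add_of_le_of_nonneg (mul_le_mul_of_nonneg_right (hm k) (sq_nonneg _))
    (integral_nonneg fun x => sq_nonneg _)

end

theorem inv_sqrt_mul_sqrt_le_sqrt {a b c : ℝ} (hc : 0 < c) (h : a ≤ c * b) :
    (√c)⁻¹ * √a ≤ √b := by
  rw [inv_mul_le_iff₀ (Real.sqrt_pos.2 hc), ← Real.sqrt_mul hc.le]
  exact Real.sqrt_le_sqrt h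

theorem sqrt_le_inv_sqrt_mul_sqrt {a b c : ℝ} (hc : 0 < c) (h : c * a ≤ b) :
    √a ≤ (√c)⁻¹ * √b := by
  rw [le_inv_mul_iff₀ (Real.sqrt_pos.2 hc), ← Real.sqrt_mul hc.le]
  exact Real.sqrt_le_sqrt h

theorem averages_matrix_bounds_general
    (d K : ℕ)
    (Ω : Set (Euc d))
    (B : Fin K → Set (Euc d)) (hBmeas : ∀ k, MeasurableSet (B k))
    (hBsub : ∀ k, B k ⊆ Ω) (hdisj : Pairwise (Function.onFun Disjoint B))
    (Mbar : ℝ)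
    (hBle : ∀ k, volume (B k) ≤ ENNReal.ofReal Mbar)
    (φ : Fin K → Euc d → ℝ)
    (hL2 : ∀ j, MemLp (φ j) 2 (volume.restrict Ω))
    (horth : ∀ j k, (∫ x in Ω, φ j x * φ k x) = if j = k then (1 : ℝ) else 0)
    (η : ℝ) (hηsmall : η * ((K : ℝ) ^ 2 + K) ≤ 1 / 2)
    (hext : ∀ j, (∫ x in Ω \ ⋃ k, B k, (φ j x) ^ 2) ≤ η)
    (Sm : Matrix (Fin K) (Fin K) ℝ)
    (hSm : ∀ k j, Sm k j = (volume (B k)).toReal⁻¹ * ∫ x in B k, φ j x)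
    (hosc : ∀ j k, (∫ x in B k, (φ j x - Sm k j) ^ 2) ≤ η) :
    (∀ β : Fin K → ℝ,
        (Real.sqrt (2 * Mbar))⁻¹ * Real.sqrt (∑ k, (β k) ^ 2) ≤
          Real.sqrt (∑ k, (Sm.mulVec β k) ^ 2)) ∧
    (∀ m : ℝ, 0 < m → (∀ k, ENNReal.ofReal m ≤ volume (B k)) →
      ∀ β : Fin K → ℝ,
        Real.sqrt (∑ k, (Sm.mulVec β k) ^ 2) ≤
          (Real.sqrt m)⁻¹ * Real.sqrt (∑ k, (β k) ^ 2)) := by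
  have hfin : ∀ k, volume (B k) ≠ ∞ := fun k => ((hBle k).trans_lt ENNReal.ofReal_lt_top).ne
  obtain rfl : Sm = averageMatrix volume B φ := by
    ext k j
    rw [hSm, averageMatrix, Matrix.of_apply, setAverage_eq, smul_eq_mul, measureReal_def]
  have hη : η * (Fintype.card (Fin K) * Fintype.card (Fin K) + Fintype.card (Fin K)) ≤ 1 / 2 :=
    by simpa [sq] using hηsmall
  refine ⟨fun β => ?_, fun m hm hmB β => ?_⟩
  · rcases le_or_gt Mbar 0 with hM | hM
    · rw [Real.sqrt_eq_zero'.2 (by linarith), inv_zero, zero_mul]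
      exact Real.sqrt_nonneg _
    · exact inv_sqrt_mul_sqrt_le_sqrt (by positivity)
        (sum_sq_le_two_mul_sum_sq_averageMatrix_mulVec hBmeas hBsub hdisj hfin
          (fun k => ENNReal.toReal_le_of_le_ofReal hM.le (hBle k)) hL2 horth hη hext hosc β)
  · exact sqrt_le_inv_sqrt_mul_sqrt hm
      (mul_sum_sq_averageMatrix_mulVec_le_sum_sq hBmeas hBsub hdisj hfin hL2 horth
        (fun k => (ENNReal.ofReal_le_iff_le_toReal (hfin k)).1 (hmB k)) β)

/-- Matrix-of-averages invertibility (Lemma 3 in quantitative form).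
If `B¹, …, B^K ⊆ Ω` are pairwise disjoint with `0 < 𝓛(B^k) ≤ M̄`, `φ₁, …, φ_K ∈ L²(Ω)`
are orthonormal, `η (K² + K) ≤ 1/2`, and the exterior masses and intra-component
oscillations of the `φ_j` are at most `η`, then the matrix `Σ` of averages
`Σ_{kj} = ⟨φ_j⟩_{B^k}` satisfies `|Σβ| ≥ (2M̄)^{-1/2} |β|`; moreover if `𝓛(B^k) ≥ m > 0`
for all `k`, then `|Σβ| ≤ m^{-1/2} |β|`. -/
theorem averages_matrix_bounds
    (d K : ℕ) (hK : 1 ≤ K)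
    (Ω : Set (Euc d)) (hΩ : MeasurableSet Ω)
    (B : Fin K → Set (Euc d)) (hBmeas : ∀ k, MeasurableSet (B k))
    (hBsub : ∀ k, B k ⊆ Ω) (hdisj : Pairwise (Function.onFun Disjoint B))
    (Mbar : ℝ) (hBpos : ∀ k, 0 < volume (B k))
    (hBle : ∀ k, volume (B k) ≤ ENNReal.ofReal Mbar)
    (φ : Fin K → Euc d → ℝ)
    (hL2 : ∀ j, MemLp (φ j) 2 (volume.restrict Ω))
    (horth : ∀ j k, (∫ x in Ω, φ j x * φ k x) = if j = k then (1 : ℝ) else 0)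
    (η : ℝ) (hη : 0 ≤ η) (hηsmall : η * ((K : ℝ) ^ 2 + K) ≤ 1 / 2)
    (hext : ∀ j, (∫ x in Ω \ ⋃ k, B k, (φ j x) ^ 2) ≤ η)
    (Sm : Matrix (Fin K) (Fin K) ℝ)
    (hSm : ∀ k j, Sm k j = (volume (B k)).toReal⁻¹ * ∫ x in B k, φ j x)
    (hosc : ∀ j k, (∫ x in B k, (φ j x - Sm k j) ^ 2) ≤ η) :
    (∀ β : Fin K → ℝ,
        (Real.sqrt (2 * Mbar))⁻¹ * Real.sqrt (∑ k, (β k) ^ 2) ≤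
          Real.sqrt (∑ k, (Sm.mulVec β k) ^ 2)) ∧
    (∀ m : ℝ, 0 < m → (∀ k, ENNReal.ofReal m ≤ volume (B k)) →
      ∀ β : Fin K → ℝ,
        Real.sqrt (∑ k, (Sm.mulVec β k) ^ 2) ≤
          (Real.sqrt m)⁻¹ * Real.sqrt (∑ k, (β k) ^ 2)) :=
  averages_matrix_bounds_general d K Ω B hBmeas hBsub hdisj Mbar hBle φ hL2 horth η hηsmall hext Sm
    hSm hosc
end
end

section
/- Let Ω ⊂ ℝ^d be a bounded measurable set, K ≥ 1 an integer, and c, m, M̄ > 0. Then there exist constants C > 0 and η₀ > 0, depending only on K, c, m, M̄, with the following property. Let ε, δ ∈ (0, η₀]; let B¹, …, B^K ⊂ Ω be pairwise disjoint measurable sets with 𝓛(B^k) ≤ M̄; let M ⊂ Ω be measurable with 𝓛(M ∩ B^k) ≤ c·δ for every k; set B^k_δ = B^k \ M and E = Ω \ (M ∪ ⋃_k B^k), and assume 𝓛(B^k_δ) ≥ m for every k. Let φ₁, …, φ_K ∈ L²(Ω) be orthonormal and satisfy, for all j, k: ∫_E φ_j² ≤ c·ε, ∫_M φ_j² ≤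 c·δ, and ∫_{B^k_δ} (φ_j − ⟨φ_j⟩_{B^k_δ})² ≤ c·ε, where ⟨φ⟩_B is the average of φ over B. Then for every γ ∈ ℝ^K and v = Σ_{k=1}^K γ_k·χ_{B^k} one has inf_{β ∈ ℝ^K} ‖v − Σ_{j=1}^K β_j φ_j‖_{L²(Ω)} ≤ C·√(ε + δ)·‖v‖_{L²(Ω)}. (This is the conditional form of the main approximation estimate, Theorem 2, Part 1: every piecewise constant function in the span of the characteristic functions χ_{B^k} is approximated in the span of φ₁,…,φ_K with error O(√(ε+δ)).) -/
/-!
Let `χ_k` be the indicator of `B^k \ M` and `S` their span in `L²(Ω)`. Splitting `Ω` into `E`,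
`M` and the `B^k \ M`, the hypotheses on `φ_j` say that `φ_j` is within `O(√(ε + δ))` of the step
function `g_j = ∑_k ⟨φ_j⟩_{B^k \ M} χ_k ∈ S`. Since `dim S ≤ K` and the `φ_j` are orthonormal,
`‖∑ β_j φ_j - ∑ β_j g_j‖ ≤ r ‖∑ β_j φ_j‖` with `r = √(∑ ‖φ_j - g_j‖²) ≤ 1/2` forces the `g_j` to
be a basis of `S`; writing `x ∈ S` as `∑ β_j g_j` then gives `‖x - ∑ β_j φ_j‖ ≤ 2 r ‖x‖`.
Finally `v = ∑ γ_k χ_{B^k}` differs from `x = ∑ γ_k χ_k` only on `M`, and since each `B^k \ M`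
has measure at least `m`, `‖v - x‖ ≤ √(cδ/m) ‖v‖` and `‖x‖ ≤ ‖v‖`.
-/

open Set MeasureTheory Function
open scoped ENNReal

section InnerProductSpace

variable {H ι : Type*} [NormedAddCommGroup H] [InnerProductSpace ℝ H] [Fintype ι]

theorem norm_sum_smul_le (β : ι → ℝ) (v : ι → H) :
    ‖∑ i, β i • v i‖ ≤ √(∑ i, β i ^ 2) * √(∑ i, ‖v i‖ ^ 2) :=
  calc ‖∑ i, β i • v i‖ ≤ ∑ i, |β i| * ‖v i‖ :=
        (norm_sum_le _ _).trans_eq (by simp only [norm_smul, Real.norm_eq_abs])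
    _ ≤ √(∑ i, |β i| ^ 2) * √(∑ i, ‖v i‖ ^ 2) := Real.sum_mul_le_sqrt_mul_sqrt _ _ _
    _ = √(∑ i, β i ^ 2) * √(∑ i, ‖v i‖ ^ 2) := by simp only [sq_abs]

theorem Orthonormal.norm_sum_smul {f : ι → H} (hf : Orthonormal ℝ f) (β : ι → ℝ) :
    ‖∑ i, β i • f i‖ = √(∑ i, β i ^ 2) := by
  rw [← Real.sqrt_sq (norm_nonneg _), ← real_inner_self_eq_norm_sq, hf.inner_sum]
  simp only [conj_trivial, sq]

theorem Orthonormal.norm_sum_smul_sub_le {f : ι → H} (hf : Orthonormal ℝ f) (g : ι → H)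
    (β : ι → ℝ) :
    ‖∑ i, β i • f i - ∑ i, β i • g i‖ ≤ √(∑ i, ‖f i - g i‖ ^ 2) * ‖∑ i, β i • f i‖ := by
  rw [← Finset.sum_sub_distrib, hf.norm_sum_smul, mul_comm]
  simp_rw [← smul_sub]
  exact norm_sum_smul_le β _

theorem Orthonormal.linearIndependent_of_sum_norm_sub_sq_lt_one {f : ι → H}
    (hf : Orthonormal ℝ f) {g : ι → H} (hfg : ∑ i, ‖f i - g i‖ ^ 2 < 1) :
    LinearIndependent ℝ g := by
  rw [Fintype.linearIndependent_iff]
  intro β hβ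
  have hr : √(∑ i, ‖f i - g i‖ ^ 2) < 1 := (Real.sqrt_lt' one_pos).mpr (by rwa [one_pow])
  have hle := hf.norm_sum_smul_sub_le g β
  rw [hβ, sub_zero] at hle
  have h0 : ‖∑ i, β i • f i‖ = 0 := by
    nlinarith [norm_nonneg (∑ i, β i • f i), Real.sqrt_nonneg (∑ i, ‖f i - g i‖ ^ 2)]
  rw [norm_eq_zero] at h0
  exact Fintype.linearIndependent_iff.mp hf.linearIndependent β h0

theorem Orthonormal.exists_norm_sub_sum_smul_le {f : ι → H} (hf : Orthonormal ℝ f)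
    {S : Submodule ℝ H} [FiniteDimensional ℝ S] (hS : Module.finrank ℝ S ≤ Fintype.card ι)
    {g : ι → H} (hgS : ∀ i, g i ∈ S) (hfg : ∑ i, ‖f i - g i‖ ^ 2 ≤ 1 / 4)
    {x : H} (hx : x ∈ S) :
    ∃ β : ι → ℝ, ‖x - ∑ i, β i • f i‖ ≤ 2 * √(∑ i, ‖f i - g i‖ ^ 2) * ‖x‖ := by
  set r := √(∑ i, ‖f i - g i‖ ^ 2)
  have hr : r ≤ 1 / 2 := (Real.sqrt_le_left (by norm_num)).mpr (by norm_num [hfg])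
  have hg := hf.linearIndependent_of_sum_norm_sub_sq_lt_one (hfg.trans_lt (by norm_num))
  have hspan : Submodule.span ℝ (range g) = S :=
    Submodule.eq_of_le_of_finrank_le (Submodule.span_le.mpr (range_subset_iff.mpr hgS))
      (by rwa [finrank_span_eq_card hg])
  obtain ⟨β, rfl⟩ := (Submodule.mem_span_range_iff_exists_fun ℝ).mp (hspan ▸ hx)
  refine ⟨β, ?_⟩
  have hclose := hf.norm_sum_smul_sub_le g β
  have hβ : ‖∑ i, β i • f i‖ ≤ 2 * ‖∑ i, β i • g i‖ := by
    have := norm_le_norm_sub_add (∑ i, β i • f i) (∑ i, β i • g i)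
    nlinarith [norm_nonneg (∑ i, β i • f i)]
  rw [norm_sub_rev]
  calc _ ≤ r * ‖∑ i, β i • f i‖ := hclose
    _ ≤ r * (2 * ‖∑ i, β i • g i‖) := mul_le_mul_of_nonneg_left hβ (Real.sqrt_nonneg _)
    _ = 2 * r * ‖∑ i, β i • g i‖ := by ring

end InnerProductSpace

namespace MeasureTheory

variable {α ι : Type*} [MeasurableSpace α] {μ : Measure α} {p : ℝ≥0∞}

theorem Lp.coeFn_finsetSum_smul (s : Finset ι) (a : ι → ℝ) (F : ι → Lp ℝ p μ) :
    ⇑(∑ i ∈ s, a i • F i) =ᵐ[μ] fun x => ∑ i ∈ s, a i * F i x := by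
  classical
  induction s using Finset.induction_on with
  | empty =>
    simp only [Finset.sum_empty]
    exact Lp.coeFn_zero ℝ p μ
  | insert i s hi ih =>
    filter_upwards [Lp.coeFn_add (a i • F i) (∑ j ∈ s, a j • F j), Lp.coeFn_smul (a i) (F i), ih]
      with x hadd hsmul hsum
    rw [Finset.sum_insert hi, Finset.sum_insert hi, hadd, Pi.add_apply, hsmul, hsum,
      Pi.smul_apply, smul_eq_mul]

theorem MemLp.toLp_sum_mul [Fintype ι] {f : ι → α → ℝ} (hf : ∀ i, MemLp (f i) p μ) (a : ι → ℝ)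
    (h : MemLp (fun x => ∑ i, a i * f i x) p μ) :
    h.toLp _ = ∑ i, a i • (hf i).toLp (f i) := by
  refine Lp.ext (h.coeFn_toLp.trans ?_)
  filter_upwards [Lp.coeFn_finsetSum_smul Finset.univ a fun i => (hf i).toLp (f i),
    ae_all_iff.mpr fun i => (hf i).coeFn_toLp] with x hsum hfx
  simp only [hsum, hfx]

theorem MemLp.inner_toLp {f g : α → ℝ} (hf : MemLp f 2 μ) (hg : MemLp g 2 μ) :
    inner ℝ (hf.toLp f) (hg.toLp g) = ∫ x, f x * g x ∂μ := by
  rw [L2.inner_def]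
  refine integral_congr_ae ?_
  filter_upwards [hf.coeFn_toLp, hg.coeFn_toLp] with x hfx hgx
  simp [hfx, hgx, mul_comm]

theorem integral_eq_setIntegral_compl_add_add_sum [Fintype ι] {F : α → ℝ} (hF : Integrable F μ)
    {M : Set α} (hM : MeasurableSet M) {B : ι → Set α} (hB : ∀ k, MeasurableSet (B k))
    (hBd : Pairwise (Disjoint on B)) :
    ∫ x, F x ∂μ = ∫ x in (M ∪ ⋃ k, B k)ᶜ, F x ∂μ + ∫ x in M, F x ∂μ
      + ∑ k, ∫ x in B k \ M, F x ∂μ := by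
  have hBM : ∀ k, MeasurableSet (B k \ M) := fun k => (hB k).diff hM
  have hU : M ∪ ⋃ k, B k = M ∪ ⋃ k, B k \ M := by rw [← iUnion_sdiff, union_sdiff_self]
  rw [← integral_add_compl (hM.union (.iUnion hB)) hF, add_comm, add_assoc, hU,
    setIntegral_union (disjoint_iUnion_right.mpr fun k => disjoint_sdiff_self_right)
      (.iUnion hBM) hF.integrableOn hF.integrableOn,
    integral_iUnion_fintype hBM (fun k l hkl => (hBd hkl).mono sdiff_subset sdiff_subset)
      fun k => hF.integrableOn]

theorem MemLp.norm_toLp_eq_lpNorm {E : Type*} [NormedAddCommGroup E] {f : α → E}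
    (hf : MemLp f p μ) : ‖hf.toLp f‖ = lpNorm f p μ := by
  rw [Lp.norm_toLp, toReal_eLpNorm hf.1]

theorem MemLp.lpNorm_sq_eq_integral {f : α → ℝ} (hf : MemLp f 2 μ) :
    lpNorm f 2 μ ^ 2 = ∫ x, f x ^ 2 ∂μ := by
  simp_rw [← hf.norm_toLp_eq_lpNorm, ← real_inner_self_eq_norm_sq, hf.inner_toLp hf, sq]

theorem measureReal_le_div_mul_measureReal {s t : Set α} {a m : ℝ} (hs : μ s ≤ ENNReal.ofReal a)
    (ht : ENNReal.ofReal m ≤ μ t) (hμt : μ t ≠ ∞) (ha : 0 ≤ a) (hm : 0 < m) : μ.real s ≤ a / m * μ.real t := by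
  have hsa : μ.real s ≤ a := ENNReal.toReal_le_of_le_ofReal ha hs
  have hmt : m ≤ μ.real t := (ENNReal.ofReal_le_iff_le_toReal hμt).mp ht
  rw [div_mul_eq_mul_div, le_div_iff₀ hm]
  nlinarith [mul_le_mul_of_nonneg_left hmt ha]

end MeasureTheory

section StepFunction

variable {α ι : Type*} [Fintype ι]

/-- Written in the form in which the theorem states `v`, so that `v` is `stepFunction B γ` by
definition. -/
noncomputable def stepFunction (A : ι → Set α) (a : ι → ℝ) (x : α) : ℝ :=
  ∑ k, a k * (A k).indicator (fun _ => 1) x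

variable {A : ι → Set α} {a : ι → ℝ} {x : α}

theorem stepFunction_apply_of_mem (hA : Pairwise (Disjoint on A)) {k : ι} (hx : x ∈ A k) :
    stepFunction A a x = a k := by
  rw [stepFunction, Finset.sum_eq_single k (fun l _ hlk => ?_) (by simp)]
  · simp [hx]
  · simp [(hA hlk).notMem_of_mem_right hx]

theorem stepFunction_apply_of_forall_notMem (hx : ∀ k, x ∉ A k) : stepFunction A a x = 0 := by
  simp [stepFunction, hx]

theorem stepFunction_sq (hA : Pairwise (Disjoint on A)) (x : α) :
    stepFunction A a x ^ 2 = stepFunction A (fun k => a k ^ 2) x := by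
  by_cases hx : ∃ k, x ∈ A k
  · obtain ⟨k, hk⟩ := hx
    rw [stepFunction_apply_of_mem hA hk, stepFunction_apply_of_mem hA hk]
  · push Not at hx
    rw [stepFunction_apply_of_forall_notMem hx, stepFunction_apply_of_forall_notMem hx]
    norm_num

theorem stepFunction_sub_stepFunction_sdiff (B : ι → Set α) (M : Set α) (a : ι → ℝ) :
    stepFunction B a - stepFunction (fun k => B k \ M) a = stepFunction (fun k => B k ∩ M) a := by
  ext x
  simp only [Pi.sub_apply, stepFunction, ← Finset.sum_sub_distrib, ← mul_sub]
  refine Finset.sum_congr rfl fun k _ => ?_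
  by_cases hB : x ∈ B k <;> by_cases hM : x ∈ M <;> simp [hB, hM]

variable [MeasurableSpace α] {μ : Measure α}

theorem memLp_stepFunction (hA : ∀ k, MeasurableSet (A k)) (hμA : ∀ k, μ (A k) ≠ ∞)
    (p : ℝ≥0∞) (a : ι → ℝ) : MemLp (stepFunction A a) p μ :=
  memLp_finsetSum _ fun k _ =>
    (memLp_indicator_const p (hA k) 1 (Or.inr (hμA k))).const_mul (a k)

theorem integral_stepFunction_sq (hA : ∀ k, MeasurableSet (A k))
    (hAd : Pairwise (Disjoint on A)) (hμA : ∀ k, μ (A k) ≠ ∞) :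
    ∫ x, stepFunction A a x ^ 2 ∂μ = ∑ k, a k ^ 2 * μ.real (A k) := by
  simp_rw [stepFunction_sq hAd, stepFunction]
  rw [integral_finsetSum _ fun k _ =>
    ((integrable_indicator_iff (hA k)).mpr (integrableOn_const (hμA k))).const_mul _]
  simp_rw [integral_const_mul]
  congr! 2 with k
  exact integral_indicator_one (hA k)

theorem integral_stepFunction_sq_le {A' : ι → Set α} (hA : ∀ k, MeasurableSet (A k))
    (hAd : Pairwise (Disjoint on A)) (hμA : ∀ k, μ (A k) ≠ ∞)
    (hA' : ∀ k, MeasurableSet (A' k)) (hA'd : Pairwise (Disjoint on A'))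
    (hμA' : ∀ k, μ (A' k) ≠ ∞) {t : ℝ} (hA'A : ∀ k, μ.real (A' k) ≤ t * μ.real (A k)) :
    ∫ x, stepFunction A' a x ^ 2 ∂μ ≤ t * ∫ x, stepFunction A a x ^ 2 ∂μ := by
  rw [integral_stepFunction_sq hA hAd hμA, integral_stepFunction_sq hA' hA'd hμA',
    Finset.mul_sum]
  refine Finset.sum_le_sum fun k _ => ?_
  calc a k ^ 2 * μ.real (A' k) ≤ a k ^ 2 * (t * μ.real (A k)) :=
        mul_le_mul_of_nonneg_left (hA'A k) (sq_nonneg _)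
    _ = t * (a k ^ 2 * μ.real (A k)) := by ring

variable {B : ι → Set α} {M : Set α}

theorem lpNorm_stepFunction_le {A' : ι → Set α} (hA : ∀ k, MeasurableSet (A k))
    (hAd : Pairwise (Disjoint on A)) (hμA : ∀ k, μ (A k) ≠ ∞)
    (hA' : ∀ k, MeasurableSet (A' k)) (hA'd : Pairwise (Disjoint on A'))
    (hμA' : ∀ k, μ (A' k) ≠ ∞) {t : ℝ} (ht : 0 ≤ t) (hA'A : ∀ k, μ.real (A' k) ≤ t * μ.real (A k))
    (a : ι → ℝ) :
    lpNorm (stepFunction A' a) 2 μ ≤ √t * lpNorm (stepFunction A a) 2 μ := by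
  have h := integral_stepFunction_sq_le (a := a) hA hAd hμA hA' hA'd hμA' hA'A
  rw [← (memLp_stepFunction hA' hμA' 2 a).lpNorm_sq_eq_integral,
    ← (memLp_stepFunction hA hμA 2 a).lpNorm_sq_eq_integral,
    ← Real.sq_sqrt ht, ← mul_pow] at h
  exact (pow_le_pow_iff_left₀ lpNorm_nonneg
    (mul_nonneg (Real.sqrt_nonneg t) lpNorm_nonneg) two_ne_zero).mp h

theorem lpNorm_stepFunction_sub_stepFunction_sdiff_le (hB : ∀ k, MeasurableSet (B k))
    (hBd : Pairwise (Disjoint on B)) (hμB : ∀ k, μ (B k) ≠ ∞) (hM : MeasurableSet M) {t : ℝ}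
    (ht : 0 ≤ t) (hBM : ∀ k, μ.real (B k ∩ M) ≤ t * μ.real (B k)) (a : ι → ℝ) :
    lpNorm (stepFunction B a - stepFunction (fun k => B k \ M) a) 2 μ ≤
      √t * lpNorm (stepFunction B a) 2 μ := by
  rw [stepFunction_sub_stepFunction_sdiff]
  exact lpNorm_stepFunction_le hB hBd hμB (fun k => (hB k).inter hM)
    (fun k l hkl => (hBd hkl).mono inter_subset_left inter_subset_left)
    (fun k => measure_ne_top_of_subset inter_subset_left (hμB k)) ht hBM a

theorem lpNorm_stepFunction_sdiff_le (hB : ∀ k, MeasurableSet (B k))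
    (hBd : Pairwise (Disjoint on B)) (hμB : ∀ k, μ (B k) ≠ ∞) (hM : MeasurableSet M)
    (a : ι → ℝ) :
    lpNorm (stepFunction (fun k => B k \ M) a) 2 μ ≤ lpNorm (stepFunction B a) 2 μ := by
  simpa using lpNorm_stepFunction_le hB hBd hμB (fun k => (hB k).diff hM)
    (fun k l hkl => (hBd hkl).mono sdiff_subset sdiff_subset)
    (fun k => measure_ne_top_of_subset sdiff_subset (hμB k)) zero_le_one
    (fun k => by simpa using measureReal_mono sdiff_subset (hμB k)) a

end StepFunction

section

variable {α ι κ : Type*} [MeasurableSpace α] {μ : Measure α} [Fintype ι] [Fintype κ]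

theorem exists_lpNorm_stepFunction_sub_sum_le [DecidableEq ι] {A : κ → Set α}
    (hA : ∀ k, MeasurableSet (A k)) (hμA : ∀ k, μ (A k) ≠ ∞)
    (hcard : Fintype.card κ ≤ Fintype.card ι) {φ : ι → α → ℝ} (hφ : ∀ j, MemLp (φ j) 2 μ)
    (hortho : ∀ i j, ∫ x, φ i x * φ j x ∂μ = if i = j then 1 else 0) (a : ι → κ → ℝ)
    (hclose : ∑ j, lpNorm (φ j - stepFunction A (a j)) 2 μ ^ 2 ≤ 1 / 4) (γ : κ → ℝ) :
    ∃ β : ι → ℝ, lpNorm (fun x => stepFunction A γ x - ∑ j, β j * φ j x) 2 μ ≤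
      2 * √(∑ j, lpNorm (φ j - stepFunction A (a j)) 2 μ ^ 2) * lpNorm (stepFunction A γ) 2 μ := by
  have hχ : ∀ k, MemLp ((A k).indicator fun _ => (1 : ℝ)) 2 μ :=
    fun k => memLp_indicator_const 2 (hA k) 1 (Or.inr (hμA k))
  set E : κ → Lp ℝ 2 μ := fun k => (hχ k).toLp _
  have hstep : ∀ b, (memLp_stepFunction hA hμA 2 b).toLp _ = ∑ k, b k • E k :=
    fun b => MemLp.toLp_sum_mul hχ b _
  have hmem : ∀ b, (memLp_stepFunction hA hμA 2 b).toLp _ ∈ Submodule.span ℝ (range E) :=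
    fun b => hstep b ▸ Submodule.sum_mem _ fun k _ =>
      Submodule.smul_mem _ _ (Submodule.subset_span (mem_range_self k))
  have : FiniteDimensional ℝ (Submodule.span ℝ (range E)) :=
    FiniteDimensional.span_of_finite ℝ (finite_range E)
  have hΦ : Orthonormal ℝ fun j => (hφ j).toLp (φ j) :=
    orthonormal_iff_ite.mpr fun i j => (MemLp.inner_toLp _ _).trans (hortho i j)
  have hdist : ∀ j, ‖(hφ j).toLp (φ j) - (memLp_stepFunction hA hμA 2 (a j)).toLp _‖ =
      lpNorm (φ j - stepFunction A (a j)) 2 μ := fun j => by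
    rw [← MemLp.toLp_sub, MemLp.norm_toLp_eq_lpNorm]
  obtain ⟨β, hβ⟩ := hΦ.exists_norm_sub_sum_smul_le ((finrank_range_le_card E).trans hcard)
    (fun j => hmem (a j)) (by simpa only [hdist] using hclose) (hmem γ)
  refine ⟨β, ?_⟩
  have hsum := memLp_finsetSum Finset.univ fun j _ => (hφ j).const_mul (β j)
  rw [← MemLp.toLp_sum_mul hφ β hsum, ← MemLp.toLp_sub, MemLp.norm_toLp_eq_lpNorm,
    MemLp.norm_toLp_eq_lpNorm] at hβ
  simp only [hdist] at hβ
  exact hβ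

end

section

variable {α ι : Type*} [MeasurableSpace α] [Fintype ι] {ν : Measure α} {Ω M : Set α}
  {B : ι → Set α}

theorem lpNorm_sub_stepFunction_sdiff_sq
    (hB : ∀ k, MeasurableSet (B k)) (hBd : Pairwise (Disjoint on B)) (hBΩ : ∀ k, B k ⊆ Ω)
    (hM : MeasurableSet M) (hMΩ : M ⊆ Ω) (hνB : ∀ k, ν (B k \ M) ≠ ∞) {φ : α → ℝ}
    (hφ : MemLp φ 2 (ν.restrict Ω)) (a : ι → ℝ) :
    lpNorm (φ - stepFunction (fun k => B k \ M) a) 2 (ν.restrict Ω) ^ 2 =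
      ∫ x in Ω \ (M ∪ ⋃ k, B k), φ x ^ 2 ∂ν + ∫ x in M, φ x ^ 2 ∂ν
        + ∑ k, ∫ x in B k \ M, (φ x - a k) ^ 2 ∂ν := by
  have hBM : ∀ k, MeasurableSet (B k \ M) := fun k => (hB k).diff hM
  have hBMd : Pairwise (Disjoint on fun k => B k \ M) :=
    fun k l hkl => (hBd hkl).mono sdiff_subset sdiff_subset
  have hU : MeasurableSet (M ∪ ⋃ k, B k)ᶜ := (hM.union (.iUnion hB)).compl
  have hL2 := hφ.sub (memLp_stepFunction hBM (fun k => (Measure.restrict_eq_self ν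
    (sdiff_subset.trans (hBΩ k))).trans_ne (hνB k)) 2 a)
  rw [hL2.lpNorm_sq_eq_integral,
    integral_eq_setIntegral_compl_add_add_sum hL2.integrable_sq hM hB hBd,
    Measure.restrict_restrict_of_subset hMΩ]
  congr 1; congr 1
  · rw [sdiff_eq_compl_inter, ← Measure.restrict_restrict hU]
    refine setIntegral_congr_fun hU fun x hx => ?_
    rw [Pi.sub_apply,
      stepFunction_apply_of_forall_notMem fun k hk => hx (Or.inr (mem_iUnion.mpr ⟨k, hk.1⟩)),
      sub_zero]
  · refine setIntegral_congr_fun hM fun x hx => ?_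
    rw [Pi.sub_apply, stepFunction_apply_of_forall_notMem fun k hk => hk.2 hx, sub_zero]
  · refine Finset.sum_congr rfl fun k _ => ?_
    rw [Measure.restrict_restrict_of_subset (sdiff_subset.trans (hBΩ k))]
    exact setIntegral_congr_fun (hBM k) fun x hx => by
      rw [Pi.sub_apply, stepFunction_apply_of_mem hBMd hx]

theorem lpNorm_sub_stepFunction_sdiff_sq_le (hB : ∀ k, MeasurableSet (B k))
    (hBd : Pairwise (Disjoint on B)) (hBΩ : ∀ k, B k ⊆ Ω) (hνB : ∀ k, ν (B k) ≠ ∞)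
    (hM : MeasurableSet M) (hMΩ : M ⊆ Ω) {c ε δ : ℝ} (hc : 0 ≤ c) (hδ : 0 ≤ δ)
    {φ : α → ℝ} (hφ : MemLp φ 2 (ν.restrict Ω))
    (hE : ∫ x in Ω \ (M ∪ ⋃ k, B k), φ x ^ 2 ∂ν ≤ c * ε) (hMφ : ∫ x in M, φ x ^ 2 ∂ν ≤ c * δ)
    (a : ι → ℝ) (hBφ : ∀ k, ∫ x in B k \ M, (φ x - a k) ^ 2 ∂ν ≤ c * ε) :
    lpNorm (φ - stepFunction (fun k => B k \ M) a) 2 (ν.restrict Ω) ^ 2 ≤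
      (Fintype.card ι + 1) * c * (ε + δ) := by
  rw [lpNorm_sub_stepFunction_sdiff_sq hB hBd hBΩ hM hMΩ
    (fun k => measure_ne_top_of_subset sdiff_subset (hνB k)) hφ]
  have hsum := Finset.sum_le_card_nsmul Finset.univ _ (c * ε) fun k _ => hBφ k
  rw [Finset.card_univ, nsmul_eq_mul] at hsum
  nlinarith [mul_nonneg (Nat.cast_nonneg (α := ℝ) (Fintype.card ι)) (mul_nonneg hc hδ)]

theorem exists_lpNorm_stepFunction_sdiff_sub_sum_le [DecidableEq ι]
    (hB : ∀ k, MeasurableSet (B k)) (hBd : Pairwise (Disjoint on B)) (hBΩ : ∀ k, B k ⊆ Ω)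
    (hνB : ∀ k, ν (B k) ≠ ∞) (hM : MeasurableSet M) (hMΩ : M ⊆ Ω) {c ε δ : ℝ} (hc : 0 ≤ c)
    (hε : 0 ≤ ε) (hδ : 0 ≤ δ) (hsmall : (Fintype.card ι + 1) ^ 2 * c * (ε + δ) ≤ 1 / 4)
    {φ : ι → α → ℝ} (hφ : ∀ j, MemLp (φ j) 2 (ν.restrict Ω))
    (hortho : ∀ i j, ∫ x in Ω, φ i x * φ j x ∂ν = if i = j then 1 else 0)
    (hE : ∀ j, ∫ x in Ω \ (M ∪ ⋃ k, B k), φ j x ^ 2 ∂ν ≤ c * ε)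
    (hMφ : ∀ j, ∫ x in M, φ j x ^ 2 ∂ν ≤ c * δ)
    (a : ι → ι → ℝ) (hBφ : ∀ j k, ∫ x in B k \ M, (φ j x - a j k) ^ 2 ∂ν ≤ c * ε) (γ : ι → ℝ) :
    ∃ β : ι → ℝ,
      lpNorm (fun x => stepFunction (fun k => B k \ M) γ x - ∑ j, β j * φ j x) 2 (ν.restrict Ω) ≤
        2 * ((Fintype.card ι + 1) * √c * √(ε + δ)) *
          lpNorm (stepFunction (fun k => B k \ M) γ) 2 (ν.restrict Ω) := by
  set K := (Fintype.card ι : ℝ)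
  have hsq : ((K + 1) * √c * √(ε + δ)) ^ 2 = (K + 1) ^ 2 * c * (ε + δ) := by
    rw [mul_pow, mul_pow, Real.sq_sqrt hc, Real.sq_sqrt (by positivity), mul_assoc]
  have hclose : ∑ j, lpNorm (φ j - stepFunction (fun k => B k \ M) (a j)) 2 (ν.restrict Ω) ^ 2 ≤
      ((K + 1) * √c * √(ε + δ)) ^ 2 := by
    calc _ ≤ ∑ _j : ι, (K + 1) * c * (ε + δ) := Finset.sum_le_sum fun j _ =>
          lpNorm_sub_stepFunction_sdiff_sq_le hB hBd hBΩ hνB hM hMΩ hc hδ (hφ j) (hE j) (hMφ j)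
            (a j) (hBφ j)
      _ ≤ ((K + 1) * √c * √(ε + δ)) ^ 2 := by
        rw [Finset.sum_const, Finset.card_univ, nsmul_eq_mul, hsq]
        nlinarith [mul_nonneg hc (add_nonneg hε hδ)]
  obtain ⟨β, hβ⟩ := exists_lpNorm_stepFunction_sub_sum_le (fun k => (hB k).diff hM)
    (fun k => measure_ne_top_of_subset sdiff_subset
      ((Measure.restrict_eq_self ν (hBΩ k)).trans_ne (hνB k))) le_rfl hφ hortho a
    (hclose.trans (hsq ▸ hsmall)) γ
  exact ⟨β, hβ.trans (mul_le_mul_of_nonneg_right (mul_le_mul_of_nonneg_left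
    ((Real.sqrt_le_left (by positivity)).mpr hclose) zero_le_two) lpNorm_nonneg)⟩

theorem exists_lpNorm_stepFunction_sub_sum_le_of_interface [DecidableEq ι]
    (hB : ∀ k, MeasurableSet (B k)) (hBd : Pairwise (Disjoint on B)) (hBΩ : ∀ k, B k ⊆ Ω)
    (hνB : ∀ k, ν (B k) ≠ ∞) (hM : MeasurableSet M) (hMΩ : M ⊆ Ω) {c m ε δ : ℝ} (hc : 0 ≤ c)
    (hm : 0 < m) (hε : 0 ≤ ε) (hδ : 0 ≤ δ)
    (hsmall : (Fintype.card ι + 1) ^ 2 * c * (ε + δ) ≤ 1 / 4)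
    (hMB : ∀ k, ν (M ∩ B k) ≤ ENNReal.ofReal (c * δ))
    (hBM : ∀ k, ENNReal.ofReal m ≤ ν (B k \ M))
    {φ : ι → α → ℝ} (hφ : ∀ j, MemLp (φ j) 2 (ν.restrict Ω))
    (hortho : ∀ i j, ∫ x in Ω, φ i x * φ j x ∂ν = if i = j then 1 else 0)
    (hE : ∀ j, ∫ x in Ω \ (M ∪ ⋃ k, B k), φ j x ^ 2 ∂ν ≤ c * ε)
    (hMφ : ∀ j, ∫ x in M, φ j x ^ 2 ∂ν ≤ c * δ)
    (a : ι → ι → ℝ) (hBφ : ∀ j k, ∫ x in B k \ M, (φ j x - a j k) ^ 2 ∂ν ≤ c * ε) (γ : ι → ℝ) :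
    ∃ β : ι → ℝ, lpNorm (fun x => stepFunction B γ x - ∑ j, β j * φ j x) 2 (ν.restrict Ω) ≤
      (√(c / m) + 2 * ((Fintype.card ι + 1) * √c)) * √(ε + δ) *
        lpNorm (stepFunction B γ) 2 (ν.restrict Ω) := by
  set μ := ν.restrict Ω
  have hμB : ∀ k, μ (B k) ≠ ∞ := fun k => (Measure.restrict_eq_self ν (hBΩ k)).trans_ne (hνB k)
  obtain ⟨β, hβ⟩ := exists_lpNorm_stepFunction_sdiff_sub_sum_le hB hBd hBΩ hνB hM hMΩ hc hε hδ
    hsmall hφ hortho hE hMφ a hBφ γ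
  refine ⟨β, ?_⟩
  have hBMB : ∀ k, μ.real (B k ∩ M) ≤ c * δ / m * μ.real (B k) := fun k =>
    measureReal_le_div_mul_measureReal
      (by rw [Measure.restrict_eq_self ν (inter_subset_left.trans (hBΩ k)), inter_comm]
          exact hMB k)
      (by rw [Measure.restrict_eq_self ν (hBΩ k)]; exact (hBM k).trans (measure_mono sdiff_subset))
      (hμB k) (by positivity) hm
  have hX := lpNorm_stepFunction_sdiff_le (μ := μ) hB hBd hμB hM γ
  have hδ' : √(c * δ / m) ≤ √(c / m) * √(ε + δ) := by
    rw [← Real.sqrt_mul (by positivity), show c * δ / m = c / m * δ by ring]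
    gcongr
    linarith
  calc _ ≤ lpNorm (stepFunction B γ - stepFunction (fun k => B k \ M) γ) 2 μ +
        lpNorm (fun x => stepFunction (fun k => B k \ M) γ x - ∑ j, β j * φ j x) 2 μ :=
        lpNorm_sub_le_lpNorm_sub_add_lpNorm_sub (memLp_stepFunction hB hμB 2 γ)
          (memLp_stepFunction (fun k => (hB k).diff hM)
            (fun k => measure_ne_top_of_subset sdiff_subset (hμB k)) 2 γ) one_le_two
    _ ≤ √(c * δ / m) * lpNorm (stepFunction B γ) 2 μ +
        2 * ((Fintype.card ι + 1) * √c * √(ε + δ)) * lpNorm (stepFunction B γ) 2 μ :=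
      add_le_add
        (lpNorm_stepFunction_sub_stepFunction_sdiff_le hB hBd hμB hM (by positivity) hBMB γ)
        (hβ.trans (mul_le_mul_of_nonneg_left hX (by positivity)))
    _ ≤ _ := by
      nlinarith [mul_le_mul_of_nonneg_right hδ' (lpNorm_nonneg (f := stepFunction B γ) (p := 2)
        (μ := μ))]

end

theorem piecewise_constant_approximation_in_span_general
    (d K : ℕ)
    (Ω : Set (Euc d))
    (c m Mbar : ℝ) (hc : 0 < c) (hm : 0 < m) :
    ∃ C > 0, ∃ η₀ > 0, ∀ ε δ : ℝ, ε ∈ Set.Ioc (0 : ℝ) η₀ → δ ∈ Set.Ioc (0 : ℝ) η₀ →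
      ∀ B : Fin K → Set (Euc d), (∀ k, MeasurableSet (B k)) → (∀ k, B k ⊆ Ω) →
        Pairwise (Function.onFun Disjoint B) →
        (∀ k, volume (B k) ≤ ENNReal.ofReal Mbar) →
      ∀ M : Set (Euc d), MeasurableSet M → M ⊆ Ω →
        (∀ k, volume (M ∩ B k) ≤ ENNReal.ofReal (c * δ)) →
        (∀ k, ENNReal.ofReal m ≤ volume (B k \ M)) →
      ∀ φ : Fin K → Euc d → ℝ, (∀ j, MemLp (φ j) 2 (volume.restrict Ω)) →
        (∀ j k, (∫ x in Ω, φ j x * φ k x) = if j = k then (1 : ℝ) else 0) →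
        (∀ j, (∫ x in Ω \ (M ∪ ⋃ k, B k), (φ j x) ^ 2) ≤ c * ε) →
        (∀ j, (∫ x in M, (φ j x) ^ 2) ≤ c * δ) →
        (∀ j k, (∫ x in B k \ M,
            (φ j x - (volume (B k \ M)).toReal⁻¹ * ∫ y in B k \ M, φ j y) ^ 2) ≤ c * ε) →
      ∀ γ : Fin K → ℝ, ∃ β : Fin K → ℝ,
        eLpNorm
            (fun x => (∑ k, γ k * (B k).indicator (fun _ => (1 : ℝ)) x)
              - ∑ j, β j * φ j x) 2 (volume.restrict Ω)
          ≤ ENNReal.ofReal (C * Real.sqrt (ε + δ)) *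
            eLpNorm (fun x => ∑ k, γ k * (B k).indicator (fun _ => (1 : ℝ)) x) 2
              (volume.restrict Ω) := by
  refine ⟨√(c / m) + 2 * ((K + 1) * √c), by positivity, 1 / (8 * (K + 1) ^ 2 * c), by positivity,
    fun ε δ hε hδ B hB hBΩ hBd hBvol M hM hMΩ hMB hBM φ hφ hortho hE hMφ hBφ γ => ?_⟩
  have hsmall : ((Fintype.card (Fin K) : ℝ) + 1) ^ 2 * c * (ε + δ) ≤ 1 / 4 := by
    have hη : ε + δ ≤ 2 * (1 / (8 * (K + 1) ^ 2 * c)) := by linarith [hε.2, hδ.2]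
    rw [Fintype.card_fin]
    calc _ ≤ (K + 1) ^ 2 * c * (2 * (1 / (8 * (K + 1) ^ 2 * c))) := by gcongr
      _ = 1 / 4 := by field_simp; ring
  have hνB : ∀ k, volume (B k) ≠ ∞ := fun k => ne_top_of_le_ne_top ENNReal.ofReal_ne_top (hBvol k)
  -- the coefficients `a j k` are the averages `⟨φ_j⟩_{B^k \ M}`, read off from `hBφ`
  obtain ⟨β, hβ⟩ := exists_lpNorm_stepFunction_sub_sum_le_of_interface hB hBd hBΩ hνB hM hMΩ
    hc.le hm hε.1.le hδ.1.le hsmall hMB hBM hφ hortho hE hMφ _ hBφ γ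
  have hμB : ∀ k, volume.restrict Ω (B k) ≠ ∞ := fun k =>
    (Measure.restrict_eq_self _ (hBΩ k)).trans_ne (hνB k)
  have hV := memLp_stepFunction hB hμB 2 γ
  have key := ENNReal.ofReal_le_ofReal hβ
  have hVβ : MemLp (fun x => stepFunction B γ x - ∑ j, β j * φ j x) 2 (volume.restrict Ω) :=
    hV.sub (memLp_finsetSum _ fun j _ => (hφ j).const_mul (β j))
  rw [Fintype.card_fin, ENNReal.ofReal_mul (by positivity), ofReal_lpNorm hV, ofReal_lpNorm hVβ]
    at key
  exact ⟨β, key⟩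

/-- Conditional form of the main approximation estimate (Theorem 2,
Part 1): under the abstracted hypotheses on the components `B^k`, the interface
neighborhood `M`, and the orthonormal family `φ₁, …, φ_K`, every piecewise constant
function `v = ∑ γ_k χ_{B^k}` is approximated in the span of `φ₁, …, φ_K` with `L²` error
at most `C √(ε + δ) ‖v‖_{L²(Ω)}`. -/
theorem piecewise_constant_approximation_in_span
    (d K : ℕ) (hK : 1 ≤ K)
    (Ω : Set (Euc d)) (hΩm : MeasurableSet Ω) (hΩb : Bornology.IsBounded Ω)
    (c m Mbar : ℝ) (hc : 0 < c) (hm : 0 < m) (hMbar : 0 < Mbar) :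
    ∃ C > 0, ∃ η₀ > 0, ∀ ε δ : ℝ, ε ∈ Set.Ioc (0 : ℝ) η₀ → δ ∈ Set.Ioc (0 : ℝ) η₀ →
      ∀ B : Fin K → Set (Euc d), (∀ k, MeasurableSet (B k)) → (∀ k, B k ⊆ Ω) →
        Pairwise (Function.onFun Disjoint B) →
        (∀ k, volume (B k) ≤ ENNReal.ofReal Mbar) →
      ∀ M : Set (Euc d), MeasurableSet M → M ⊆ Ω →
        (∀ k, volume (M ∩ B k) ≤ ENNReal.ofReal (c * δ)) →
        (∀ k, ENNReal.ofReal m ≤ volume (B k \ M)) →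
      ∀ φ : Fin K → Euc d → ℝ, (∀ j, MemLp (φ j) 2 (volume.restrict Ω)) →
        (∀ j k, (∫ x in Ω, φ j x * φ k x) = if j = k then (1 : ℝ) else 0) →
        (∀ j, (∫ x in Ω \ (M ∪ ⋃ k, B k), (φ j x) ^ 2) ≤ c * ε) →
        (∀ j, (∫ x in M, (φ j x) ^ 2) ≤ c * δ) →
        (∀ j k, (∫ x in B k \ M,
            (φ j x - (volume (B k \ M)).toReal⁻¹ * ∫ y in B k \ M, φ j y) ^ 2) ≤ c * ε) →
      ∀ γ : Fin K → ℝ, ∃ β : Fin K → ℝ,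
        eLpNorm
            (fun x => (∑ k, γ k * (B k).indicator (fun _ => (1 : ℝ)) x)
              - ∑ j, β j * φ j x) 2 (volume.restrict Ω)
          ≤ ENNReal.ofReal (C * Real.sqrt (ε + δ)) *
            eLpNorm (fun x => ∑ k, γ k * (B k).indicator (fun _ => (1 : ℝ)) x) 2
              (volume.restrict Ω) :=
  piecewise_constant_approximation_in_span_general d K Ω c m Mbar hc hm
end
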